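/- arXiv:1009.2257 — 8 statements merged into one kernel-verified Lean document; each statement's English description precedes it below -/
import Mathlib

section
/- For integers p ≥ 1 and q ≥ 1, let X = {(x, y) ∈ ℝ^p × ℝ^q : ‖x‖² = ‖y‖²}. Then X ∩ {(x, y) : y = 0} = {(0, 0)}, and the map sending (x, y) to (x / ‖y‖, y) is a homeomorphism from X ∖ {(0, 0)} onto S^{p−1} × (ℝ^q ∖ {0}). -/
open Set

section Aux

variable (p q : ℕ)

local notation "E" => EuclideanSpace ℝ (Fin p)
local notation "F" => EuclideanSpace ℝ (Fin q)

noncomputable def coneForward :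
    ↥({z : E × F | ‖z.1‖ ^ 2 = ‖z.2‖ ^ 2} \ {((0 : E), (0 : F))}) →
    ↥(Metric.sphere (0 : E) 1) × ↥(({(0 : F)} : Set F)ᶜ) :=
  fun z => by
    have hz := z.2
    have hz1 : ‖z.1.1‖ ^ 2 = ‖z.1.2‖ ^ 2 := hz.1
    have hy : z.1.2 ≠ 0 := by
      intro h0
      apply hz.2
      rw [h0] at hz1
      simp only [norm_zero] at hz1
      have : ‖z.1.1‖ = 0 := by nlinarith [norm_nonneg z.1.1]
      have hx0 : z.1.1 = 0 := norm_eq_zero.mp this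
      simp [mem_singleton_iff, Prod.ext_iff, hx0, h0]
    have hnorm : ‖z.1.1‖ = ‖z.1.2‖ := by
      nlinarith [norm_nonneg z.1.1, norm_nonneg z.1.2]
    exact (⟨‖z.1.2‖⁻¹ • z.1.1, by
        simp [mem_sphere_iff_norm, norm_smul, hnorm, abs_of_nonneg (inv_nonneg.mpr (norm_nonneg _)),
          inv_mul_cancel₀ (norm_ne_zero_iff.mpr hy)]⟩,
      ⟨z.1.2, by simpa using hy⟩)

noncomputable def coneBackward :
    ↥(Metric.sphere (0 : E) 1) × ↥(({(0 : F)} : Set F)ᶜ) →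
    ↥({z : E × F | ‖z.1‖ ^ 2 = ‖z.2‖ ^ 2} \ {((0 : E), (0 : F))}) :=
  fun w => ⟨(‖(w.2 : F)‖ • (w.1 : E), (w.2 : F)), by
    have hu : ‖(w.1 : E)‖ = 1 := by simpa using mem_sphere_iff_norm.mp w.1.2
    have hy : (w.2 : F) ≠ 0 := w.2.2
    constructor
    · show ‖_‖ ^ 2 = ‖_‖ ^ 2
      simp [norm_smul, hu]
    · intro h
      exact hy (congrArg Prod.snd (mem_singleton_iff.mp h))⟩

end Aux

/-- For X = {(x, y) ∈ ℝ^p × ℝ^q : ‖x‖² = ‖y‖²} (p, q ≥ 1): X ∩ {y = 0} = {(0,0)}, and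
(x, y) ↦ (x / ‖y‖, y) is a homeomorphism from X ∖ {(0,0)} onto S^{p-1} × (ℝ^q ∖ {0}). -/
theorem cone_minus_vertex_homeo_sphere_prod
    (p q : ℕ) (hp : 1 ≤ p) (hq : 1 ≤ q) :
    ({z : EuclideanSpace ℝ (Fin p) × EuclideanSpace ℝ (Fin q) | ‖z.1‖ ^ 2 = ‖z.2‖ ^ 2} ∩
        {z : EuclideanSpace ℝ (Fin p) × EuclideanSpace ℝ (Fin q) | z.2 = 0}
      = {((0 : EuclideanSpace ℝ (Fin p)), (0 : EuclideanSpace ℝ (Fin q)))}) ∧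
    ∃ h : ↥({z : EuclideanSpace ℝ (Fin p) × EuclideanSpace ℝ (Fin q) |
              ‖z.1‖ ^ 2 = ‖z.2‖ ^ 2} \
            {((0 : EuclideanSpace ℝ (Fin p)), (0 : EuclideanSpace ℝ (Fin q)))}) ≃ₜ
        ↥(Metric.sphere (0 : EuclideanSpace ℝ (Fin p)) 1) ×
          ↥(({(0 : EuclideanSpace ℝ (Fin q))} : Set (EuclideanSpace ℝ (Fin q)))ᶜ),
      ∀ z : ↥({z : EuclideanSpace ℝ (Fin p) × EuclideanSpace ℝ (Fin q) |
              ‖z.1‖ ^ 2 = ‖z.2‖ ^ 2} \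
            {((0 : EuclideanSpace ℝ (Fin p)), (0 : EuclideanSpace ℝ (Fin q)))}),
        (((h z).1 : EuclideanSpace ℝ (Fin p)) = ‖z.1.2‖⁻¹ • z.1.1) ∧
        (((h z).2 : EuclideanSpace ℝ (Fin q)) = z.1.2) := by
  constructor
  · ext z
    simp only [mem_inter_iff, mem_setOf_eq, mem_singleton_iff, Prod.ext_iff]
    constructor
    · rintro ⟨h1, h2⟩
      rw [h2] at h1
      simp only [norm_zero] at h1
      have : ‖z.1‖ = 0 := by nlinarith [norm_nonneg z.1]
      exact ⟨norm_eq_zero.mp this, h2⟩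
    · rintro ⟨h1, h2⟩
      simp [h1, h2]
  · have key : ∀ z : ↥({z : EuclideanSpace ℝ (Fin p) × EuclideanSpace ℝ (Fin q) |
        ‖z.1‖ ^ 2 = ‖z.2‖ ^ 2} \
        {((0 : EuclideanSpace ℝ (Fin p)), (0 : EuclideanSpace ℝ (Fin q)))}),
        z.1.2 ≠ 0 ∧ ‖z.1.1‖ = ‖z.1.2‖ := by
      intro z
      have hz := z.2
      have hz1 : ‖z.1.1‖ ^ 2 = ‖z.1.2‖ ^ 2 := hz.1
      have hn : ‖z.1.1‖ = ‖z.1.2‖ := by nlinarith [norm_nonneg z.1.1, norm_nonneg z.1.2]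
      refine ⟨?_, hn⟩
      intro h0
      apply hz.2
      have hx0 : z.1.1 = 0 := norm_eq_zero.mp (by rw [hn, h0, norm_zero])
      simp [mem_singleton_iff, Prod.ext_iff, hx0, h0]
    refine ⟨⟨⟨coneForward p q, coneBackward p q, ?_, ?_⟩, ?_, ?_⟩, ?_⟩
    · intro z
      obtain ⟨hy, hn⟩ := key z
      apply Subtype.ext
      show ((‖z.1.2‖ • (‖z.1.2‖⁻¹ • z.1.1) : EuclideanSpace ℝ (Fin p)), z.1.2) = z.1
      rw [smul_smul, mul_inv_cancel₀ (norm_ne_zero_iff.mpr hy), one_smul]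
    · intro w
      have hy : (w.2 : EuclideanSpace ℝ (Fin q)) ≠ 0 := w.2.2
      apply Prod.ext
      · apply Subtype.ext
        show ‖(w.2 : EuclideanSpace ℝ (Fin q))‖⁻¹ • (‖(w.2 : EuclideanSpace ℝ (Fin q))‖ • (w.1 : EuclideanSpace ℝ (Fin p))) = _
        rw [smul_smul, inv_mul_cancel₀ (norm_ne_zero_iff.mpr hy), one_smul]
      · rfl
    · -- continuity forward
      apply Continuous.prodMk
      · apply Continuous.subtype_mk
        exact ((continuous_norm.comp (continuous_snd.comp continuous_subtype_val)).inv₀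
          (fun z => norm_ne_zero_iff.mpr (key z).1)).smul
          (continuous_fst.comp continuous_subtype_val)
      · exact Continuous.subtype_mk (continuous_snd.comp continuous_subtype_val) _
    · -- continuity backward
      apply Continuous.subtype_mk
      apply Continuous.prodMk
      · exact ((continuous_norm.comp (continuous_subtype_val.comp continuous_snd))).smul
          (continuous_subtype_val.comp continuous_fst)
      · exact continuous_subtype_val.comp continuous_snd
    · intro z
      exact ⟨rfl, rfl⟩
end

section
/- Broughton's example: let f : ℝ² → ℝ be defined by f(x, y) = x(xy + 1). Then: (i) f has no critical points, i.e. the gradient (∂f/∂x, ∂f/∂y) = (2xy + 1, x²) is nonzero at every point of ℝ²; (ii) the fiber f⁻¹(0) has exactly 3 connected components (the line {x = 0} and the two branches of the hyperbola {xy = −1}); (iii) for every t ≠ 0, the fiber f⁻¹(t) has exactly 2 connected components (the two branches of the graph y = (t − x)/x² over x > 0 and over x < 0). -/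
open Set

/-- Broughton's example f(x, y) = x(xy + 1). -/
def broughton : ℝ × ℝ → ℝ := fun z => z.1 * (z.1 * z.2 + 1)

open Function
lemma preconn_sub {Z : Set (ℝ × ℝ)} {P : Set (ℝ × ℝ)} (hPZ : P ⊆ Z)
    (hP : IsPreconnected P) :
    IsPreconnected ((Subtype.val : Z → ℝ × ℝ) ⁻¹' P) := by
  rw [← Topology.IsInducing.subtypeVal.isPreconnected_image]
  rwa [Subtype.image_preimage_coe, inter_eq_right.mpr hPZ]

-- pieces of the zero fiber
lemma piece0 : {w : ℝ × ℝ | broughton w = 0 ∧ w.1 = 0} = range (fun y : ℝ => ((0:ℝ), y)) := by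
  ext w
  simp only [broughton, mem_setOf_eq, mem_range]
  constructor
  · rintro ⟨_, h⟩; exact ⟨w.2, by rw [← h]⟩
  · rintro ⟨y, rfl⟩; simp

lemma piece1 : {w : ℝ × ℝ | broughton w = 0 ∧ 0 < w.1} =
    (fun x : ℝ => (x, -1/x)) '' Ioi 0 := by
  ext w
  simp only [broughton, mem_setOf_eq, mem_image, mem_Ioi]
  constructor
  · rintro ⟨h, hx⟩
    refine ⟨w.1, hx, ?_⟩
    have hx' : w.1 ≠ 0 := ne_of_gt hx
    have : w.1 * w.2 + 1 = 0 := by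
      rcases mul_eq_zero.mp h with h | h
      · exact absurd h hx'
      · exact h
    have hw2 : w.2 = -1 / w.1 := by field_simp; linarith
    exact Prod.ext rfl hw2.symm
  · rintro ⟨x, hx, rfl⟩
    have hx' : (x:ℝ) ≠ 0 := ne_of_gt hx
    constructor
    · field_simp; ring
    · exact hx

lemma piece2 : {w : ℝ × ℝ | broughton w = 0 ∧ w.1 < 0} =
    (fun x : ℝ => (x, -1/x)) '' Iio 0 := by
  ext w
  simp only [broughton, mem_setOf_eq, mem_image, mem_Iio]
  constructor
  · rintro ⟨h, hx⟩
    refine ⟨w.1, hx, ?_⟩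
    have hx' : w.1 ≠ 0 := ne_of_lt hx
    have : w.1 * w.2 + 1 = 0 := by
      rcases mul_eq_zero.mp h with h | h
      · exact absurd h hx'
      · exact h
    have hw2 : w.2 = -1 / w.1 := by field_simp; linarith
    exact Prod.ext rfl hw2.symm
  · rintro ⟨x, hx, rfl⟩
    have hx' : (x:ℝ) ≠ 0 := ne_of_lt hx
    constructor
    · field_simp; ring
    · exact hx

lemma hyp_conn {s : Set ℝ} (hs : IsPreconnected s) (h0 : (0:ℝ) ∉ s) :
    IsPreconnected ((fun x : ℝ => (x, -1/x)) '' s) := by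
  apply hs.image
  apply ContinuousOn.prodMk continuousOn_id
  exact ContinuousOn.div continuousOn_const continuousOn_id (fun x hx => by
    intro h0'; exact h0 (h0' ▸ hx))

lemma card_cc {X Y : Type*} [TopologicalSpace X] [TopologicalSpace Y]
    [TotallyDisconnectedSpace Y] {g : X → Y} (hg : Continuous g)
    (hsurj : Surjective g) (hconn : ∀ y, IsPreconnected (g ⁻¹' {y})) :
    Nat.card (ConnectedComponents X) = Nat.card Y := by
  refine Nat.card_eq_of_bijective hg.connectedComponentsLift ⟨?_, ?_⟩
  · rintro ⟨x⟩ ⟨y⟩ h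
    show ((x : ConnectedComponents X)) = (y : ConnectedComponents X)
    have h' : g x = g y := by
      exact h
    rw [ConnectedComponents.coe_eq_coe]
    have hx : x ∈ g ⁻¹' {g y} := by simp [h']
    have hy : y ∈ g ⁻¹' {g y} := by simp
    exact (connectedComponent_eq ((hconn (g y)).subset_connectedComponent hy hx)).symm
  · intro y
    obtain ⟨x, rfl⟩ := hsurj y
    exact ⟨x, hg.connectedComponentsLift_apply_coe x⟩

lemma zero_fiber_card : Nat.card (ConnectedComponents ↥(broughton ⁻¹' {0})) = 3 := by
  set Z := broughton ⁻¹' {(0:ℝ)} with hZdef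
  let g : Z → Fin 3 := fun z => if z.val.1 = 0 then 0 else if 0 < z.val.1 then 1 else 2
  have hf0 : g ⁻¹' {0} = Subtype.val ⁻¹' {w : ℝ × ℝ | broughton w = 0 ∧ w.1 = 0} := by
    ext ⟨w, hw⟩
    have hb : broughton w = 0 := hw
    simp only [g, mem_preimage, mem_singleton_iff, mem_setOf_eq]
    split_ifs with h1 h2 <;> simp_all
  have hf1 : g ⁻¹' {1} = Subtype.val ⁻¹' {w : ℝ × ℝ | broughton w = 0 ∧ 0 < w.1} := by
    ext ⟨w, hw⟩
    have hb : broughton w = 0 := hw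
    simp only [g, mem_preimage, mem_singleton_iff, mem_setOf_eq]
    split_ifs with h1 h2 <;> simp_all
  have hf2 : g ⁻¹' {2} = Subtype.val ⁻¹' {w : ℝ × ℝ | broughton w = 0 ∧ w.1 < 0} := by
    ext ⟨w, hw⟩
    have hb : broughton w = 0 := hw
    simp only [g, mem_preimage, mem_singleton_iff, mem_setOf_eq]
    split_ifs with h1 h2
    · constructor
      · intro h; exact absurd h (by decide)
      · rintro ⟨_, hlt⟩; rw [h1] at hlt; exact absurd hlt (lt_irrefl 0)
    · constructor
      · intro h; exact absurd h (by decide)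
      · rintro ⟨_, hlt⟩; exact absurd h2 (not_lt.mpr hlt.le)
    · simp [hb, lt_of_le_of_ne (not_lt.mp h2) h1]
  have hf0' : g ⁻¹' {0} = Subtype.val ⁻¹' {w : ℝ × ℝ | |w.1 * w.2| < 1} := by
    rw [hf0]
    ext ⟨w, hw⟩
    have hb : broughton w = 0 := hw
    simp only [mem_preimage, mem_setOf_eq]
    constructor
    · rintro ⟨_, h1⟩; rw [h1]; norm_num
    · intro h
      refine ⟨hb, ?_⟩
      by_contra h1
      have h' : w.1 * w.2 + 1 = 0 := by
        rcases mul_eq_zero.mp hb with h' | h'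
        · exact absurd h' h1
        · exact h'
      have : w.1 * w.2 = -1 := by linarith
      rw [this] at h; norm_num at h
  have hhalf1 : (Subtype.val ⁻¹' {w : ℝ × ℝ | broughton w = 0 ∧ 0 < w.1} : Set Z) =
      Subtype.val ⁻¹' {w : ℝ × ℝ | 0 < w.1} := by
    ext ⟨w, hw⟩
    have hb : broughton w = 0 := hw
    simp [hb]
  have hhalf2 : (Subtype.val ⁻¹' {w : ℝ × ℝ | broughton w = 0 ∧ w.1 < 0} : Set Z) =
      Subtype.val ⁻¹' {w : ℝ × ℝ | w.1 < 0} := by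
    ext ⟨w, hw⟩
    have hb : broughton w = 0 := hw
    simp [hb]
  have hgc : Continuous g := by
    apply IsLocallyConstant.continuous
    rw [IsLocallyConstant.iff_isOpen_fiber]
    intro y
    fin_cases y
    · show IsOpen (g ⁻¹' {(0 : Fin 3)})
      rw [hf0']
      apply IsOpen.preimage continuous_subtype_val
      exact isOpen_Iio.preimage ((continuous_fst.mul continuous_snd).abs)
    · show IsOpen (g ⁻¹' {(1 : Fin 3)})
      rw [hf1, hhalf1]
      exact (isOpen_lt continuous_const continuous_fst).preimage continuous_subtype_val
    · show IsOpen (g ⁻¹' {(2 : Fin 3)})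
      rw [hf2, hhalf2]
      exact (isOpen_lt continuous_fst continuous_const).preimage continuous_subtype_val
  have hsurj : Function.Surjective g := by
    intro y
    fin_cases y
    · exact ⟨⟨(0, 0), by simp [hZdef, broughton]⟩, by simp [g]⟩
    · refine ⟨⟨(1, -1), by simp [hZdef, broughton]⟩, ?_⟩
      simp only [g]
      norm_num
    · refine ⟨⟨(-1, 1), by simp [hZdef, broughton]⟩, ?_⟩
      show (if ((-1:ℝ), (1:ℝ)).1 = 0 then (0:Fin 3) else if 0 < ((-1:ℝ), (1:ℝ)).1 then 1 else 2) = _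
      norm_num
      rfl
  have hconn : ∀ y : Fin 3, IsPreconnected (g ⁻¹' {y}) := by
    intro y
    fin_cases y
    · show IsPreconnected (g ⁻¹' {(0 : Fin 3)})
      rw [hf0]
      apply preconn_sub (fun w hw => hw.1)
      rw [piece0]
      exact isPreconnected_range (continuous_const.prodMk continuous_id)
    · show IsPreconnected (g ⁻¹' {(1 : Fin 3)})
      rw [hf1]
      apply preconn_sub (fun w hw => hw.1)
      rw [piece1]
      exact hyp_conn isPreconnected_Ioi (by simp)
    · show IsPreconnected (g ⁻¹' {(2 : Fin 3)})
      rw [hf2]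
      apply preconn_sub (fun w hw => hw.1)
      rw [piece2]
      exact hyp_conn isPreconnected_Iio (by simp)
  rw [card_cc hgc hsurj hconn]
  simp [Nat.card_eq_fintype_card]

lemma graph_conn (t : ℝ) {s : Set ℝ} (hs : IsPreconnected s) (h0 : (0:ℝ) ∉ s) :
    IsPreconnected ((fun x : ℝ => (x, (t - x) / x ^ 2)) '' s) := by
  apply hs.image
  apply ContinuousOn.prodMk continuousOn_id
  exact ContinuousOn.div (continuousOn_const.sub continuousOn_id)
    (continuousOn_id.pow 2)
    (fun x hx => pow_ne_zero 2 (fun h => h0 (h ▸ hx)))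

lemma piece_pos (t : ℝ) : {w : ℝ × ℝ | broughton w = t ∧ 0 < w.1} =
    (fun x : ℝ => (x, (t - x) / x ^ 2)) '' Ioi 0 := by
  ext w
  simp only [broughton, mem_setOf_eq, mem_image, mem_Ioi]
  constructor
  · rintro ⟨h, hx⟩
    refine ⟨w.1, hx, Prod.ext rfl ?_⟩
    have hx' : w.1 ≠ 0 := ne_of_gt hx
    show (t - w.1) / w.1 ^ 2 = w.2
    field_simp
    linear_combination -h
  · rintro ⟨x, hx, rfl⟩
    have hx' : (x:ℝ) ≠ 0 := ne_of_gt hx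
    refine ⟨?_, hx⟩
    field_simp
    ring
lemma piece_neg (t : ℝ) : {w : ℝ × ℝ | broughton w = t ∧ w.1 < 0} =
    (fun x : ℝ => (x, (t - x) / x ^ 2)) '' Iio 0 := by
  ext w
  simp only [broughton, mem_setOf_eq, mem_image, mem_Iio]
  constructor
  · rintro ⟨h, hx⟩
    refine ⟨w.1, hx, Prod.ext rfl ?_⟩
    have hx' : w.1 ≠ 0 := ne_of_lt hx
    show (t - w.1) / w.1 ^ 2 = w.2
    field_simp
    linear_combination -h
  · rintro ⟨x, hx, rfl⟩
    have hx' : (x:ℝ) ≠ 0 := ne_of_lt hx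
    refine ⟨?_, hx⟩
    field_simp
    ring

lemma nonzero_fiber_card (t : ℝ) (ht : t ≠ 0) :
    Nat.card (ConnectedComponents ↥(broughton ⁻¹' {t})) = 2 := by
  set Z := broughton ⁻¹' {t} with hZdef
  have hx0 : ∀ w : ℝ × ℝ, w ∈ Z → w.1 ≠ 0 := by
    intro w hw h
    have hb : broughton w = t := hw
    rw [broughton] at hb
    rw [h] at hb
    simp at hb
    exact ht hb.symm
  let g : Z → Bool := fun z => decide (0 < z.val.1)
  have hft : g ⁻¹' {true} = Subtype.val ⁻¹' {w : ℝ × ℝ | broughton w = t ∧ 0 < w.1} := by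
    ext ⟨w, hw⟩
    have hb : broughton w = t := hw
    simp [g, hb]
  have hff : g ⁻¹' {false} = Subtype.val ⁻¹' {w : ℝ × ℝ | broughton w = t ∧ w.1 < 0} := by
    ext ⟨w, hw⟩
    have hb : broughton w = t := hw
    have hne := hx0 w hw
    simp only [g, mem_preimage, mem_singleton_iff, decide_eq_false_iff_not, not_lt,
      mem_setOf_eq]
    constructor
    · intro h; exact ⟨hb, lt_of_le_of_ne h hne⟩
    · rintro ⟨_, h⟩; exact h.le
  have hhalfp : (Subtype.val ⁻¹' {w : ℝ × ℝ | broughton w = t ∧ 0 < w.1} : Set Z) =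
      Subtype.val ⁻¹' {w : ℝ × ℝ | 0 < w.1} := by
    ext ⟨w, hw⟩
    have hb : broughton w = t := hw
    simp [hb]
  have hhalfn : (Subtype.val ⁻¹' {w : ℝ × ℝ | broughton w = t ∧ w.1 < 0} : Set Z) =
      Subtype.val ⁻¹' {w : ℝ × ℝ | w.1 < 0} := by
    ext ⟨w, hw⟩
    have hb : broughton w = t := hw
    simp [hb]
  have hgc : Continuous g := by
    apply IsLocallyConstant.continuous
    rw [IsLocallyConstant.iff_isOpen_fiber]
    intro y
    cases y
    · rw [hff, hhalfn]
      exact (isOpen_lt continuous_fst continuous_const).preimage continuous_subtype_val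
    · rw [hft, hhalfp]
      exact (isOpen_lt continuous_const continuous_fst).preimage continuous_subtype_val
  have hsurj : Function.Surjective g := by
    intro y
    cases y
    · refine ⟨⟨(-1, t + 1), ?_⟩, by simp [g]⟩
      show broughton (-1, t + 1) = t
      simp [broughton]
    · refine ⟨⟨(1, t - 1), ?_⟩, by simp [g]⟩
      show broughton (1, t - 1) = t
      simp [broughton]
  have hconn : ∀ y : Bool, IsPreconnected (g ⁻¹' {y}) := by
    intro y
    cases y
    · rw [hff]
      apply preconn_sub (fun w hw => hw.1)
      rw [piece_neg]
      exact graph_conn t isPreconnected_Iio (by simp)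
    · rw [hft]
      apply preconn_sub (fun w hw => hw.1)
      rw [piece_pos]
      exact graph_conn t isPreconnected_Ioi (by simp)
  rw [card_cc hgc hsurj hconn]
  simp [Nat.card_eq_fintype_card]

lemma broughton_fderiv (z : ℝ × ℝ) : fderiv ℝ broughton z ≠ 0 := by
  have h1 : HasFDerivAt (fun w : ℝ × ℝ => w.1 * w.2)
      (z.1 • ContinuousLinearMap.snd ℝ ℝ ℝ + z.2 • ContinuousLinearMap.fst ℝ ℝ ℝ) z :=
    (hasFDerivAt_fst (𝕜 := ℝ) (p := z)).mul (hasFDerivAt_snd (𝕜 := ℝ) (p := z))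
  have h2 : HasFDerivAt (fun w : ℝ × ℝ => w.1 * w.2 + 1)
      (z.1 • ContinuousLinearMap.snd ℝ ℝ ℝ + z.2 • ContinuousLinearMap.fst ℝ ℝ ℝ) z :=
    h1.add_const 1
  have h3 : HasFDerivAt broughton
      (z.1 • (z.1 • ContinuousLinearMap.snd ℝ ℝ ℝ + z.2 • ContinuousLinearMap.fst ℝ ℝ ℝ)
        + (z.1 * z.2 + 1) • ContinuousLinearMap.fst ℝ ℝ ℝ) z :=
    (hasFDerivAt_fst (𝕜 := ℝ) (p := z)).mul h2
  rw [h3.fderiv]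
  intro hzero
  have hx : z.1 * z.1 = 0 := by
    have := congrArg (fun L : (ℝ × ℝ) →L[ℝ] ℝ => L (0, 1)) hzero
    simpa using this
  have hx0 : z.1 = 0 := by nlinarith [sq_nonneg z.1]
  have hy := congrArg (fun L : (ℝ × ℝ) →L[ℝ] ℝ => L (1, 0)) hzero
  simp [hx0] at hy

/-- Broughton's example: f has no critical points, its zero fiber has exactly 3 connected
components, and every other fiber has exactly 2 connected components. -/
theorem broughton_example :
    (∀ z : ℝ × ℝ, fderiv ℝ broughton z ≠ 0) ∧
    Nat.card (ConnectedComponents ↥(broughton ⁻¹' {0})) = 3 ∧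
    (∀ t : ℝ, t ≠ 0 → Nat.card (ConnectedComponents ↥(broughton ⁻¹' {t})) = 2) := by
  exact ⟨broughton_fderiv, zero_fiber_card, nonzero_fiber_card⟩
end

section
/- The map f : ℝ² → ℝ defined by f(x, y) = x(xy + 1) is not locally trivial at infinity at 0 ∈ ℝ; that is, there do not exist a compact set K ⊆ ℝ², an open neighborhood D ⊆ ℝ of 0, a topological space F, and a homeomorphism h from (ℝ² ∖ K) ∩ f⁻¹(D) onto D × F whose first component equals f. -/
open Set

/-- The map f(x, y) = x(xy + 1) is not locally trivial at infinity at 0 ∈ ℝ: there are no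
compact K ⊆ ℝ², open neighborhood D of 0, topological space F and homeomorphism
(ℝ² ∖ K) ∩ f⁻¹(D) ≅ D × F whose first component is f. -/
theorem broughton_not_locally_trivial_at_infinity :
    ¬ ∃ (K : Set (ℝ × ℝ)), IsCompact K ∧
      ∃ (D : Set ℝ), IsOpen D ∧ (0 : ℝ) ∈ D ∧
        ∃ (F : Type) (_ : TopologicalSpace F)
          (h : ↥(Kᶜ ∩ broughton ⁻¹' D) ≃ₜ ↥D × F),
          ∀ z : ↥(Kᶜ ∩ broughton ⁻¹' D), (((h z).1 : ℝ)) = broughton z.1 := by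
  rintro ⟨K, hK, D, hD, hD0, F, _, h, hh⟩
  obtain ⟨R, hR⟩ := hK.isBounded.exists_norm_le
  obtain ⟨ε, hε, hball⟩ := Metric.isOpen_iff.mp hD 0 hD0
  set Y : ℝ := max R (1/ε) + 1 with hYdef
  have hYR : R < Y := by
    have := le_max_left R (1/ε); rw [hYdef]; linarith
  have hYε : 1/ε < Y := by
    have := le_max_right R (1/ε); rw [hYdef]; linarith
  have hY0 : 0 < Y := lt_of_lt_of_le (by positivity) (le_of_lt hYε)
  have hinv : 1/Y < ε := by
    have h1 : (0:ℝ) < 1/ε := by positivity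
    calc 1/Y < 1/(1/ε) := one_div_lt_one_div_of_lt h1 hYε
    _ = ε := by field_simp
  -- membership of the segment in S
  have mem : ∀ x ∈ Icc (-(1/Y)) 0, (x, Y) ∈ Kᶜ ∩ broughton ⁻¹' D := by
    rintro x ⟨hx1, hx2⟩
    constructor
    · intro hxK
      have h1 : ‖((x, Y) : ℝ × ℝ)‖ ≤ R := hR _ hxK
      have h2 : ‖((x, Y) : ℝ × ℝ)‖ = max ‖x‖ ‖Y‖ := rfl
      have h3 : ‖Y‖ = Y := abs_of_pos hY0
      have := le_max_right ‖x‖ ‖Y‖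
      linarith [h2 ▸ h1]
    · -- |x(xY+1)| ≤ 1/Y < ε
      have hxY : -1 ≤ x * Y := by
        have := mul_le_mul_of_nonneg_right hx1 (le_of_lt hY0)
        have hYne : Y ≠ 0 := ne_of_gt hY0
        calc (-1 : ℝ) = -(1/Y) * Y := by field_simp
        _ ≤ x * Y := this
      have hxY2 : x * Y ≤ 0 := mul_nonpos_of_nonpos_of_nonneg hx2 (le_of_lt hY0)
      have habs : |x * (x * Y + 1)| < ε := by
        have h1 : |x| ≤ 1/Y := by
          rw [abs_le]; constructor <;> [linarith; linarith [hx2]]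
        have h2 : |x * Y + 1| ≤ 1 := by rw [abs_le]; constructor <;> linarith
        calc |x * (x * Y + 1)| = |x| * |x * Y + 1| := abs_mul _ _
          _ ≤ (1/Y) * 1 :=
              mul_le_mul h1 h2 (abs_nonneg _) (one_div_nonneg.mpr hY0.le)
          _ < ε := by linarith
      apply hball
      simpa [broughton, Real.dist_eq, abs_mul] using habs
  -- the connecting path
  have hIccne : (-(1/Y) : ℝ) ≤ 0 := neg_nonpos.mpr (one_div_nonneg.mpr hY0.le)
  let g : ↥(Icc (-(1/Y)) (0:ℝ)) → ↥(Kᶜ ∩ broughton ⁻¹' D) :=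
    fun t => ⟨(t.1, Y), mem t.1 t.2⟩
  have hgc : Continuous g :=
    Continuous.subtype_mk (continuous_subtype_val.prodMk continuous_const) _
  haveI : ConnectedSpace ↥(Icc (-(1/Y)) (0:ℝ)) :=
    Subtype.connectedSpace ⟨⟨0, hIccne, le_refl 0⟩, isPreconnected_Icc⟩
  let a := g ⟨0, hIccne, le_refl 0⟩
  let b := g ⟨-(1/Y), le_refl _, hIccne⟩
  -- fibers of a and b are 0
  have hfa0 : broughton a.1 = 0 := by simp [a, g, broughton]
  have hfb0 : broughton b.1 = 0 := by
    have hYne : Y ≠ 0 := ne_of_gt hY0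
    simp [b, g, broughton]
    field_simp
    norm_num
  -- connected set C in F
  let C : Set F := range (fun t => (h (g t)).2)
  have hCconn : IsConnected C :=
    isConnected_range (continuous_snd.comp (h.continuous.comp hgc))
  -- P = h.symm '' ({0} ×ˢ C), connected subset of the fiber over 0
  let z0 : ↥D := ⟨0, hD0⟩
  let P : Set ↥(Kᶜ ∩ broughton ⁻¹' D) := h.symm '' ({z0} ×ˢ C)
  have hPconn : IsConnected P :=
    (isConnected_singleton.prod hCconn).image _ h.symm.continuous.continuousOn
  have haP : a ∈ P := by
    refine ⟨h a, ⟨?_, ⟨_, rfl⟩⟩, h.symm_apply_apply a⟩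
    have : ((h a).1 : ℝ) = 0 := (hh a).trans hfa0
    simp only [mem_singleton_iff]
    exact Subtype.ext this
  have hbP : b ∈ P := by
    refine ⟨h b, ⟨?_, ⟨_, rfl⟩⟩, h.symm_apply_apply b⟩
    have : ((h b).1 : ℝ) = 0 := (hh b).trans hfb0
    simp only [mem_singleton_iff]
    exact Subtype.ext this
  -- every z ∈ P lies in the fiber over 0
  have hPfiber : ∀ z ∈ P, broughton z.1 = 0 := by
    rintro z ⟨w, ⟨hw1, _⟩, rfl⟩
    have : (h (h.symm w)).1 = z0 := by
      rw [h.apply_symm_apply]; exact hw1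
    have h0 : ((h (h.symm w)).1 : ℝ) = 0 := by rw [this]
    exact (hh (h.symm w)).symm.trans h0
  -- the separating function x*y + 1
  let φ : ↥(Kᶜ ∩ broughton ⁻¹' D) → ℝ := fun z => z.1.1 * z.1.2 + 1
  have hφc : Continuous φ := by
    exact ((continuous_fst.comp continuous_subtype_val).mul
      (continuous_snd.comp continuous_subtype_val)).add continuous_const
  let Q : Set ℝ := φ '' P
  have hQconn : IsConnected Q := hPconn.image _ hφc.continuousOn
  have hQ01 : ∀ q ∈ Q, q = 0 ∨ q = 1 := by
    rintro q ⟨z, hz, rfl⟩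
    have := hPfiber z hz
    rcases mul_eq_zero.mp this with h1 | h2
    · right; simp [φ, h1]
    · left; exact h2
  have h1Q : (1 : ℝ) ∈ Q := ⟨a, haP, by simp [φ, a, g]⟩
  have h0Q : (0 : ℝ) ∈ Q := ⟨b, hbP, by
    have hYne : Y ≠ 0 := ne_of_gt hY0
    simp [φ, b, g]
    field_simp; norm_num⟩
  have hsub : Icc (0:ℝ) 1 ⊆ Q := hQconn.isPreconnected.Icc_subset h0Q h1Q
  have hhalf : (1/2 : ℝ) ∈ Q := hsub ⟨by norm_num, by norm_num⟩
  rcases hQ01 _ hhalf with h' | h' <;> norm_num at h'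
end

section
/- Shiota's example: let g : ℝ² → ℝ be defined by g(x, y) = (x(xy + 1) + 1)² + x². Then: (i) g has no critical points, i.e. the gradient of g is nonzero at every point of ℝ²; (ii) g(x, y) > 0 for every (x, y) ∈ ℝ²; (iii) the range of g is exactly the open interval (0, +∞). In particular, g is a smooth map ℝ² → ℝ with empty critical set which is not surjective. -/
open Set

/-- Shiota's example g(x, y) = (x(xy + 1) + 1)² + x². -/
def shiota : ℝ × ℝ → ℝ := fun z => (z.1 * (z.1 * z.2 + 1) + 1) ^ 2 + z.1 ^ 2

lemma shiota_hasFDerivAt (z : ℝ × ℝ) :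
    HasFDerivAt shiota
      (((z.1 * (z.1 * z.2 + 1) + 1) •
          (z.1 • (z.1 • ContinuousLinearMap.snd ℝ ℝ ℝ + z.2 • ContinuousLinearMap.fst ℝ ℝ ℝ) +
            (z.1 * z.2 + 1) • ContinuousLinearMap.fst ℝ ℝ ℝ) +
        (z.1 * (z.1 * z.2 + 1) + 1) •
          (z.1 • (z.1 • ContinuousLinearMap.snd ℝ ℝ ℝ + z.2 • ContinuousLinearMap.fst ℝ ℝ ℝ) +
            (z.1 * z.2 + 1) • ContinuousLinearMap.fst ℝ ℝ ℝ)) +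
        (z.1 • ContinuousLinearMap.fst ℝ ℝ ℝ + z.1 • ContinuousLinearMap.fst ℝ ℝ ℝ)) z := by
  have hx : HasFDerivAt (fun z : ℝ × ℝ => z.1) (ContinuousLinearMap.fst ℝ ℝ ℝ) z :=
    hasFDerivAt_fst
  have hy : HasFDerivAt (fun z : ℝ × ℝ => z.2) (ContinuousLinearMap.snd ℝ ℝ ℝ) z :=
    hasFDerivAt_snd
  have h1 := (hx.mul hy).add_const 1
  have hu := (hx.mul h1).add_const 1
  have h := (hu.mul hu).add (hx.mul hx)
  have hfun : (fun z : ℝ × ℝ => (z.1 * (z.1 * z.2 + 1) + 1) * (z.1 * (z.1 * z.2 + 1) + 1)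
      + z.1 * z.1) = shiota := by
    funext w; simp only [shiota]; ring
  rw [← hfun]; exact h

lemma shiota_pos (z : ℝ × ℝ) : 0 < shiota z := by
  rcases eq_or_ne z.1 0 with h | h
  · simp [shiota, h]
  · have h1 : 0 < z.1 ^ 2 := by positivity
    simp only [shiota]
    nlinarith [sq_nonneg (z.1 * (z.1 * z.2 + 1) + 1)]

/-- Shiota's example: g has no critical points, is everywhere positive, and its range is
exactly the open interval (0, +∞); in particular g is not surjective. -/
theorem shiota_example :
    (∀ z : ℝ × ℝ, fderiv ℝ shiota z ≠ 0) ∧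
    (∀ z : ℝ × ℝ, 0 < shiota z) ∧
    Set.range shiota = Set.Ioi (0 : ℝ) ∧
    ¬ Function.Surjective shiota := by
  have hrange : Set.range shiota = Set.Ioi (0 : ℝ) := by
    ext t
    constructor
    · rintro ⟨z, rfl⟩
      exact shiota_pos z
    · intro ht
      have ht' : (0 : ℝ) < t := ht
      have htne : t ≠ 0 := ht'.ne'
      set s := Real.sqrt t with hsdef
      have hs : s ^ 2 = t := Real.sq_sqrt ht'.le
      refine ⟨(s, -(s + 1) / t), ?_⟩
      have hu0 : s * (s * (-(s + 1) / t) + 1) + 1 = 0 := by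
        field_simp
        linear_combination (-s - 1) * hs
      simp only [shiota]
      rw [hu0]
      simpa using hs
  refine ⟨?_, shiota_pos, hrange, ?_⟩
  · intro z h0
    have hD := (shiota_hasFDerivAt z).fderiv
    rw [h0] at hD
    set x := z.1
    set y := z.2
    have e1 := congrArg (fun L : ℝ × ℝ →L[ℝ] ℝ => L (1, 0)) hD.symm
    have e2 := congrArg (fun L : ℝ × ℝ →L[ℝ] ℝ => L (0, 1)) hD.symm
    simp only [ContinuousLinearMap.add_apply, ContinuousLinearMap.smul_apply,
      ContinuousLinearMap.zero_apply, ContinuousLinearMap.coe_fst',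
      ContinuousLinearMap.coe_snd', smul_eq_mul] at e1 e2
    rcases eq_or_ne x 0 with hx | hx
    · rw [hx] at e1; norm_num at e1
    · rcases eq_or_ne (x * (x * y + 1) + 1) 0 with hu | hu
      · rw [hu] at e1; simp at e1; exact hx e1
      · have h2 : (x * (x * y + 1) + 1) * x ^ 2 = 0 := by nlinarith [e2]
        rcases mul_eq_zero.mp h2 with h | h
        · exact hu h
        · exact hx ((pow_eq_zero_iff two_ne_zero).mp h)
  · intro hs
    rcases hs 0 with ⟨z, hz⟩
    exact absurd hz (shiota_pos z).ne'
end

section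
/- Tibăr–Zaharia's example, critical locus: let f : ℝ² → ℝ be defined by f(x, y) = x²y² + 2xy + (y² − 1)². Then the set of critical points of f (points where the gradient of f vanishes) is exactly {(0, 0), (1, −1), (−1, 1)}, and the critical values are f(0, 0) = 1 and f(1, −1) = f(−1, 1) = −1. -/
open Set

/-- Tibăr–Zaharia's example f(x, y) = x²y² + 2xy + (y² − 1)². -/
def tibarZaharia : ℝ × ℝ → ℝ :=
  fun z => z.1 ^ 2 * z.2 ^ 2 + 2 * z.1 * z.2 + (z.2 ^ 2 - 1) ^ 2

lemma tz_hasFDerivAt (x y : ℝ) :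
    HasFDerivAt tibarZaharia
      ((2 * x * y ^ 2 + 2 * y) • ContinuousLinearMap.fst ℝ ℝ ℝ
        + (2 * x ^ 2 * y + 2 * x + 4 * y * (y ^ 2 - 1)) • ContinuousLinearMap.snd ℝ ℝ ℝ)
      (x, y) := by
  have hx : HasFDerivAt (fun z : ℝ × ℝ => z.1) (ContinuousLinearMap.fst ℝ ℝ ℝ) (x, y) :=
    hasFDerivAt_fst
  have hy : HasFDerivAt (fun z : ℝ × ℝ => z.2) (ContinuousLinearMap.snd ℝ ℝ ℝ) (x, y) :=
    hasFDerivAt_snd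
  have h := (((hx.mul hx).mul (hy.mul hy)).add ((hx.const_mul 2).mul hy)).add
    (((hy.mul hy).sub_const 1).mul ((hy.mul hy).sub_const 1))
  have heq : tibarZaharia = fun z : ℝ × ℝ =>
      z.1 * z.1 * (z.2 * z.2) + 2 * z.1 * z.2 + (z.2 * z.2 - 1) * (z.2 * z.2 - 1) := by
    funext z; simp [tibarZaharia]; ring
  rw [heq]
  refine h.congr_fderiv ?_
  apply ContinuousLinearMap.ext
  intro v
  simp
  ring

/-- Tibăr–Zaharia's example: the critical locus is exactly {(0,0), (1,−1), (−1,1)}, with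
critical values f(0,0) = 1 and f(1,−1) = f(−1,1) = −1. -/
theorem tibarZaharia_critical_locus :
    ({z : ℝ × ℝ | fderiv ℝ tibarZaharia z = 0}
      = {((0 : ℝ), (0 : ℝ)), ((1 : ℝ), (-1 : ℝ)), ((-1 : ℝ), (1 : ℝ))}) ∧
    tibarZaharia (0, 0) = 1 ∧
    tibarZaharia (1, -1) = -1 ∧
    tibarZaharia (-1, 1) = -1 := by
  refine ⟨?_, by norm_num [tibarZaharia], by norm_num [tibarZaharia],
    by norm_num [tibarZaharia]⟩
  ext ⟨x, y⟩
  rw [mem_setOf_eq, (tz_hasFDerivAt x y).fderiv]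
  simp only [mem_insert_iff, mem_singleton_iff, Prod.mk.injEq]
  constructor
  · intro h
    have h1 : (2 * x * y ^ 2 + 2 * y) = 0 := by
      have := congrArg (fun L : ℝ × ℝ →L[ℝ] ℝ => L (1, 0)) h
      simpa using this
    have h2 : (2 * x ^ 2 * y + 2 * x + 4 * y * (y ^ 2 - 1)) = 0 := by
      have := congrArg (fun L : ℝ × ℝ →L[ℝ] ℝ => L (0, 1)) h
      simpa using this
    have h1' : y * (x * y + 1) = 0 := by linear_combination h1 / 2
    rcases mul_eq_zero.1 h1' with hy0 | hxy
    · left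
      constructor
      · nlinarith
      · exact hy0
    · -- x * y + 1 = 0
      have hy2 : y * ((y - 1) * (y + 1)) = 0 := by nlinarith
      have hyne : y ≠ 0 := by
        intro h0; rw [h0] at hxy; norm_num at hxy
      rcases mul_eq_zero.1 hy2 with h | h
      · exact absurd h hyne
      rcases mul_eq_zero.1 h with h | h
      · right; right
        have hy1 : y = 1 := by linarith
        constructor
        · nlinarith
        · exact hy1
      · right; left
        have hy1 : y = -1 := by linarith
        constructor
        · nlinarith
        · exact hy1
  · intro h
    rcases h with ⟨hx, hy⟩ | ⟨hx, hy⟩ | ⟨hx, hy⟩ <;>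
      · subst hx; subst hy
        norm_num
end

section
/- Tibăr–Zaharia's example, fibers: let f : ℝ² → ℝ be defined by f(x, y) = x²y² + 2xy + (y² − 1)². Then for every t with −1 < t < 0, the fiber f⁻¹(t) is nonempty, compact, and has exactly 2 connected components, while for every t with 0 < t < 1, the fiber f⁻¹(t) is nonempty, noncompact, and has exactly 2 connected components. -/
open Set

lemma two_components {S A B : Set (ℝ × ℝ)}
    (hSA : S = A ∪ B) (hA : IsConnected A) (hB : IsConnected B)
    (hApos : ∀ p ∈ A, 0 < p.2) (hBneg : ∀ p ∈ B, p.2 < 0) :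
    Nat.card (ConnectedComponents ↥S) = 2 := by
  have hASub : A ⊆ S := hSA ▸ subset_union_left
  have hBSub : B ⊆ S := hSA ▸ subset_union_right
  set g : ↥S → Bool := fun p => decide (0 < (p : ℝ × ℝ).2) with hgdef
  have hmemA : ∀ p : ↥S, g p = true → (p : ℝ × ℝ) ∈ A := by
    intro p hp
    have h0 : 0 < (p : ℝ × ℝ).2 := of_decide_eq_true hp
    have := p.2
    replace this := hSA.subset this
    rcases this with h | h
    · exact h
    · exact absurd (hBneg _ h) (by linarith)
  have hmemB : ∀ p : ↥S, g p = false → (p : ℝ × ℝ) ∈ B := by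
    intro p hp
    have h0 : ¬ 0 < (p : ℝ × ℝ).2 := of_decide_eq_false hp
    have := p.2
    replace this := hSA.subset this
    rcases this with h | h
    · exact absurd (hApos _ h) h0
    · exact h
  have hg : Continuous g := by
    apply IsLocallyConstant.continuous
    rw [IsLocallyConstant.iff_isOpen_fiber]
    intro b
    cases b
    · have : g ⁻¹' {false} = (fun p : ↥S => (p : ℝ × ℝ).2) ⁻¹' (Iio 0) := by
        ext p
        simp only [mem_preimage, mem_singleton_iff, mem_Iio]
        constructor
        · intro h; exact hBneg _ (hmemB p h)
        · intro h; simp [hgdef, not_lt.2 h.le]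
      rw [this]
      exact (continuous_snd.comp continuous_subtype_val).isOpen_preimage _ isOpen_Iio
    · have : g ⁻¹' {true} = (fun p : ↥S => (p : ℝ × ℝ).2) ⁻¹' (Ioi 0) := by
        ext p
        simp only [mem_preimage, mem_singleton_iff, mem_Ioi]
        constructor
        · intro h; exact hApos _ (hmemA p h)
        · intro h; simp [hgdef, h]
      rw [this]
      exact (continuous_snd.comp continuous_subtype_val).isOpen_preimage _ isOpen_Ioi
  have hconn : ∀ (C : Set (ℝ × ℝ)), IsConnected C → C ⊆ S →
      ∀ p q : ↥S, (p : ℝ × ℝ) ∈ C → (q : ℝ × ℝ) ∈ C →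
      (p : ConnectedComponents ↥S) = q := by
    intro C hC hCS p q hp hq
    have hpre : IsPreconnected (Subtype.val ⁻¹' C : Set ↥S) := by
      rw [← Topology.IsInducing.subtypeVal.isPreconnected_image]
      have : Subtype.val '' (Subtype.val ⁻¹' C : Set ↥S) = C := by
        rw [Subtype.image_preimage_coe]
        exact inter_eq_self_of_subset_right hCS
      rw [this]; exact hC.isPreconnected
    have := hpre.subset_connectedComponent (x := q) hq hp
    exact ConnectedComponents.coe_eq_coe'.2 this
  have hbij : Function.Bijective hg.connectedComponentsLift := by
    constructor
    · intro c₁ c₂ hcc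
      obtain ⟨p, rfl⟩ := ConnectedComponents.surjective_coe c₁
      obtain ⟨q, rfl⟩ := ConnectedComponents.surjective_coe c₂
      rw [hg.connectedComponentsLift_apply_coe, hg.connectedComponentsLift_apply_coe] at hcc
      cases hb : g q
      · rw [hb] at hcc
        exact hconn B hB hBSub p q (hmemB p hcc) (hmemB q hb)
      · rw [hb] at hcc
        exact hconn A hA hASub p q (hmemA p hcc) (hmemA q hb)
    · intro b
      cases b
      · obtain ⟨p, hp⟩ := hB.nonempty
        refine ⟨(⟨p, hBSub hp⟩ : ↥S), ?_⟩
        rw [hg.connectedComponentsLift_apply_coe]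
        simp [hgdef, not_lt.2 (hBneg p hp).le]
      · obtain ⟨p, hp⟩ := hA.nonempty
        refine ⟨(⟨p, hASub hp⟩ : ↥S), ?_⟩
        rw [hg.connectedComponentsLift_apply_coe]
        simp [hgdef, hApos p hp]
  rw [Nat.card_eq_of_bijective _ hbij]
  simp


lemma arc_isConnected (s : ℝ) (hs : 0 < s) :
    IsConnected {p : ℝ × ℝ | (p.1 + 1) ^ 2 + p.2 ^ 2 = s ∧ -1 < p.2} := by
  have hrs : Real.sqrt s ^ 2 = s := Real.sq_sqrt hs.le
  have hr0 : 0 < Real.sqrt s := Real.sqrt_pos.2 hs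
  set D : Set ℝ := Ioi (-1) ∩ Icc (-Real.sqrt s) (Real.sqrt s) with hD
  have hDconn : IsPreconnected D :=
    (Set.OrdConnected.inter Set.ordConnected_Ioi Set.ordConnected_Icc).isPreconnected
  have h0D : (0 : ℝ) ∈ D := ⟨by norm_num, by constructor <;> [linarith; linarith]⟩
  set P1 : Set (ℝ × ℝ) := (fun v => (-1 + Real.sqrt (s - v ^ 2), v)) '' D with hP1
  set P2 : Set (ℝ × ℝ) := (fun v => (-1 - Real.sqrt (s - v ^ 2), v)) '' D with hP2
  set P3 : Set (ℝ × ℝ) :=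
    (fun u => (u, Real.sqrt (s - (u + 1) ^ 2))) '' Icc (-1 - Real.sqrt s) (-1 + Real.sqrt s)
    with hP3
  have hg1 : Continuous fun v : ℝ => (-1 + Real.sqrt (s - v ^ 2), v) := by fun_prop
  have hg2 : Continuous fun v : ℝ => (-1 - Real.sqrt (s - v ^ 2), v) := by fun_prop
  have hg3 : Continuous fun u : ℝ => (u, Real.sqrt (s - (u + 1) ^ 2)) := by fun_prop
  have hP1c : IsConnected P1 :=
    (IsConnected.image ⟨⟨0, h0D⟩, hDconn⟩ _ hg1.continuousOn)
  have hP2c : IsConnected P2 :=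
    (IsConnected.image ⟨⟨0, h0D⟩, hDconn⟩ _ hg2.continuousOn)
  have hP3c : IsConnected P3 := by
    refine IsConnected.image ⟨⟨-1, ?_⟩, isPreconnected_Icc⟩ _ hg3.continuousOn
    constructor <;> linarith
  have key1 : ((-1 + Real.sqrt s, 0) : ℝ × ℝ) ∈ P1 := by
    refine ⟨0, h0D, ?_⟩
    norm_num
  have key13 : ((-1 + Real.sqrt s, 0) : ℝ × ℝ) ∈ P3 := by
    refine ⟨-1 + Real.sqrt s, ⟨by linarith, le_refl _⟩, ?_⟩
    have : s - (-1 + Real.sqrt s + 1) ^ 2 = 0 := by rw [show (-1 + Real.sqrt s + 1) = Real.sqrt s by ring, hrs]; ring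
    simp only [this]; norm_num
  have key2 : ((-1 - Real.sqrt s, 0) : ℝ × ℝ) ∈ P2 := ⟨0, h0D, by norm_num⟩
  have key23 : ((-1 - Real.sqrt s, 0) : ℝ × ℝ) ∈ P3 := by
    refine ⟨-1 - Real.sqrt s, ⟨le_refl _, by linarith⟩, ?_⟩
    have : s - (-1 - Real.sqrt s + 1) ^ 2 = 0 := by
      rw [show (-1 - Real.sqrt s + 1) = -Real.sqrt s by ring]
      rw [neg_pow]; simp [hrs]
    simp only [this]; norm_num
  have hunion : IsConnected (P3 ∪ P1 ∪ P2) := by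
    refine IsConnected.union ⟨(-1 - Real.sqrt s, 0), ?_, key2⟩
      (IsConnected.union ⟨(-1 + Real.sqrt s, 0), key13, key1⟩ hP3c hP1c) hP2c
    exact mem_union_left _ key23
  have heq : {p : ℝ × ℝ | (p.1 + 1) ^ 2 + p.2 ^ 2 = s ∧ -1 < p.2} = P3 ∪ P1 ∪ P2 := by
    ext ⟨u, v⟩
    simp only [mem_setOf_eq]
    constructor
    · rintro ⟨hcirc, hv⟩
      rcases le_or_gt 0 v with hv0 | hv0
      · left; left
        refine ⟨u, ⟨?_, ?_⟩, ?_⟩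
        · nlinarith
        · nlinarith
        · have : Real.sqrt (s - (u + 1) ^ 2) = v := by
            rw [show s - (u + 1) ^ 2 = v ^ 2 by linarith]
            exact Real.sqrt_sq hv0
          simp only [this]
      · have hvD : v ∈ D := by
          refine ⟨hv, ?_, ?_⟩ <;> nlinarith
        rcases le_or_gt 0 (u + 1) with hu0 | hu0
        · left; right
          refine ⟨v, hvD, ?_⟩
          have : Real.sqrt (s - v ^ 2) = u + 1 := by
            rw [show s - v ^ 2 = (u + 1) ^ 2 by linarith]
            exact Real.sqrt_sq hu0
          simp only [this, Prod.mk.injEq, and_true]; linarith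
        · right
          refine ⟨v, hvD, ?_⟩
          have : Real.sqrt (s - v ^ 2) = -(u + 1) := by
            rw [show s - v ^ 2 = (-(u+1)) ^ 2 by ring_nf; linarith]
            exact Real.sqrt_sq (by linarith)
          simp only [this, Prod.mk.injEq, and_true]; linarith
    · rintro ((⟨w, ⟨hw1, hw2⟩, hwe⟩ | ⟨w, ⟨hw1, hw2, hw3⟩, hwe⟩) | ⟨w, ⟨hw1, hw2, hw3⟩, hwe⟩)
      · simp only [Prod.mk.injEq] at hwe
        obtain ⟨rfl, rfl⟩ := hwe
        have hrad : 0 ≤ s - (w + 1) ^ 2 := by nlinarith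
        refine ⟨?_, ?_⟩
        · rw [Real.sq_sqrt hrad]; ring
        · have := Real.sqrt_nonneg (s - (w + 1) ^ 2); linarith
      · simp only [Prod.mk.injEq] at hwe
        obtain ⟨rfl, rfl⟩ := hwe
        have hrad : 0 ≤ s - w ^ 2 := by nlinarith
        refine ⟨?_, hw1⟩
        rw [show -1 + Real.sqrt (s - w ^ 2) + 1 = Real.sqrt (s - w ^ 2) by ring,
          Real.sq_sqrt hrad]; ring
      · simp only [Prod.mk.injEq] at hwe
        obtain ⟨rfl, rfl⟩ := hwe
        have hrad : 0 ≤ s - w ^ 2 := by nlinarith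
        refine ⟨?_, hw1⟩
        rw [show (-1 - Real.sqrt (s - w ^ 2) + 1) ^ 2 = Real.sqrt (s - w ^ 2) ^ 2 by ring,
          Real.sq_sqrt hrad]; ring
  rw [heq]; exact hunion

lemma halfA_isConnected (s : ℝ) (hs : 0 < s) :
    IsConnected {p : ℝ × ℝ | (p.1 * p.2 + 1) ^ 2 + (p.2 ^ 2 - 1) ^ 2 = s ∧ 0 < p.2} := by
  set Arc := {p : ℝ × ℝ | (p.1 + 1) ^ 2 + p.2 ^ 2 = s ∧ -1 < p.2} with hArc
  set Φ : ℝ × ℝ → ℝ × ℝ := fun p => (p.1 / Real.sqrt (1 + p.2), Real.sqrt (1 + p.2)) with hΦdef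
  have hsq : Continuous fun p : ℝ × ℝ => Real.sqrt (1 + p.2) := by fun_prop
  have hΦ : ContinuousOn Φ Arc := by
    apply ContinuousOn.prodMk
    · apply ContinuousOn.div continuous_fst.continuousOn hsq.continuousOn
      intro p hp
      have : (0:ℝ) < 1 + p.2 := by have := hp.2; simp only [hArc, mem_setOf_eq] at hp; linarith [hp.2]
      exact (Real.sqrt_pos.2 this).ne'
    · exact hsq.continuousOn
  have him : Φ '' Arc = {p : ℝ × ℝ | (p.1 * p.2 + 1) ^ 2 + (p.2 ^ 2 - 1) ^ 2 = s ∧ 0 < p.2} := by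
    ext ⟨x, y⟩
    constructor
    · rintro ⟨⟨u, v⟩, ⟨hc, hv⟩, hwe⟩
      simp only [hΦdef, Prod.mk.injEq] at hwe
      obtain ⟨rfl, rfl⟩ := hwe
      have h1v : (0:ℝ) < 1 + v := by linarith
      have hs2 : Real.sqrt (1 + v) ^ 2 = 1 + v := Real.sq_sqrt h1v.le
      have hne : Real.sqrt (1 + v) ≠ 0 := (Real.sqrt_pos.2 h1v).ne'
      refine ⟨?_, Real.sqrt_pos.2 h1v⟩
      rw [div_mul_cancel₀ _ hne, hs2]
      linear_combination hc
    · rintro ⟨hc, hy⟩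
      refine ⟨(x * y, y ^ 2 - 1), ⟨hc, by show (-1:ℝ) < y ^ 2 - 1; nlinarith⟩, ?_⟩
      have h1 : 1 + (y ^ 2 - 1) = y ^ 2 := by ring
      simp only [hΦdef, Prod.mk.injEq, h1, Real.sqrt_sq hy.le]
      exact ⟨mul_div_cancel_right₀ x hy.ne', trivial⟩
  rw [← him]
  exact (arc_isConnected s hs).image Φ hΦ



lemma tz_fiber_eq (t : ℝ) :
    tibarZaharia ⁻¹' {t} = {p : ℝ × ℝ | (p.1 * p.2 + 1) ^ 2 + (p.2 ^ 2 - 1) ^ 2 = t + 1} := by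
  ext p
  simp only [mem_preimage, mem_singleton_iff, mem_setOf_eq, tibarZaharia]
  constructor <;> intro h <;> nlinarith [h]

lemma tz_split (t : ℝ) (ht : t < 1) :
    tibarZaharia ⁻¹' {t} =
      {p : ℝ × ℝ | (p.1 * p.2 + 1) ^ 2 + (p.2 ^ 2 - 1) ^ 2 = t + 1 ∧ 0 < p.2} ∪
      {p : ℝ × ℝ | (p.1 * p.2 + 1) ^ 2 + (p.2 ^ 2 - 1) ^ 2 = t + 1 ∧ p.2 < 0} := by
  rw [tz_fiber_eq]
  ext ⟨x, y⟩
  simp only [mem_setOf_eq, mem_union]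
  constructor
  · intro h
    rcases lt_trichotomy 0 y with hy | hy | hy
    · exact Or.inl ⟨h, hy⟩
    · exfalso; subst hy; simp at h; nlinarith
    · exact Or.inr ⟨h, hy⟩
  · rintro (⟨h, _⟩ | ⟨h, _⟩) <;> exact h

lemma tz_nonempty (t : ℝ) (h1 : -1 < t) : (tibarZaharia ⁻¹' {t}).Nonempty := by
  rw [tz_fiber_eq]
  refine ⟨(Real.sqrt (t + 1) - 1, 1), ?_⟩
  simp only [mem_setOf_eq]
  have : Real.sqrt (t + 1) ^ 2 = t + 1 := Real.sq_sqrt (by linarith)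
  nlinarith [this]

lemma tz_B_eq (t : ℝ) :
    {p : ℝ × ℝ | (p.1 * p.2 + 1) ^ 2 + (p.2 ^ 2 - 1) ^ 2 = t + 1 ∧ p.2 < 0} =
      (fun p : ℝ × ℝ => -p) ''
        {p : ℝ × ℝ | (p.1 * p.2 + 1) ^ 2 + (p.2 ^ 2 - 1) ^ 2 = t + 1 ∧ 0 < p.2} := by
  ext ⟨x, y⟩
  simp only [mem_setOf_eq, mem_image]
  constructor
  · rintro ⟨h, hy⟩
    refine ⟨(-x, -y), ⟨?_, by simpa using hy⟩, by simp [Prod.ext_iff]⟩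
    · simp only; nlinarith [h]
  · rintro ⟨⟨a, b⟩, ⟨h, hb⟩, he⟩
    have hx : x = -a := by
      have := congrArg Prod.fst he; simpa using this.symm
    have hy : y = -b := by
      have := congrArg Prod.snd he; simpa using this.symm
    subst hx; subst hy
    exact ⟨by nlinarith [h], by simpa using hb⟩

lemma tz_compact (t : ℝ) (h1 : -1 < t) (h2 : t < 0) : IsCompact (tibarZaharia ⁻¹' {t}) := by
  have hcont : Continuous tibarZaharia := by unfold tibarZaharia; fun_prop
  apply Metric.isCompact_of_isClosed_isBounded (isClosed_singleton.preimage hcont)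
  rw [isBounded_iff_forall_norm_le]
  refine ⟨8 / (-t) + 2, ?_⟩
  rintro ⟨x, y⟩ hp
  rw [tz_fiber_eq] at hp
  simp only [mem_setOf_eq] at hp
  have hM : (0:ℝ) ≤ 8 / (-t) := div_nonneg (by norm_num) (by linarith)
  have hy2 : y ^ 2 ≤ 2 := by nlinarith [sq_nonneg (x * y + 1), sq_nonneg (y ^ 2)]
  have hylb : -t / 2 ≤ y ^ 2 := by nlinarith [sq_nonneg (x * y + 1), sq_nonneg y]
  have hxy : (x * y) ^ 2 ≤ 4 := by nlinarith [sq_nonneg (y ^ 2 - 1)]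
  have hx2 : x ^ 2 ≤ 8 / (-t) := by
    rw [le_div_iff₀ (by linarith : (0:ℝ) < -t)]
    nlinarith [sq_nonneg x]
  have hxb : |x| ≤ 8 / (-t) + 2 := by
    nlinarith [sq_abs x, abs_nonneg x]
  have hyb : |y| ≤ 8 / (-t) + 2 := by
    nlinarith [sq_abs y, abs_nonneg y]
  calc ‖((x, y) : ℝ × ℝ)‖ = max ‖x‖ ‖y‖ := rfl
    _ ≤ 8 / (-t) + 2 := max_le (by simpa [Real.norm_eq_abs] using hxb)
        (by simpa [Real.norm_eq_abs] using hyb)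

lemma tz_noncompact (t : ℝ) (h1 : 0 < t) (h2 : t < 1) : ¬ IsCompact (tibarZaharia ⁻¹' {t}) := by
  intro hcomp
  have hb := hcomp.isBounded
  rw [isBounded_iff_forall_norm_le] at hb
  obtain ⟨R, hR⟩ := hb
  obtain ⟨p₀, hp₀⟩ := tz_nonempty t (by linarith)
  have hR0 : (0:ℝ) ≤ R := le_trans (norm_nonneg p₀) (hR p₀ hp₀)
  set m := Real.sqrt ((t + 1) / 2) with hm
  have hm2 : m ^ 2 = (t + 1) / 2 := Real.sq_sqrt (by linarith)
  have hm0 : 0 ≤ m := Real.sqrt_nonneg _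
  have hm1 : m < 1 := by nlinarith
  set δ : ℝ := (1 - t) / 4 with hδ
  have hδ0 : 0 < δ := by rw [hδ]; linarith
  set y : ℝ := min (Real.sqrt δ) ((1 - m) / (R + 1)) with hy
  have hy0 : 0 < y := lt_min (Real.sqrt_pos.2 hδ0) (div_pos (by linarith) (by linarith))
  have hyδ : y ^ 2 ≤ δ := by
    have h1' : y ≤ Real.sqrt δ := min_le_left _ _
    nlinarith [Real.sq_sqrt hδ0.le, Real.sqrt_nonneg δ]
  have hy1 : y ^ 2 ≤ 1 := by nlinarith
  set A : ℝ := t + 1 - (y ^ 2 - 1) ^ 2 with hA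
  have hA0 : 0 ≤ A := by nlinarith [sq_nonneg y]
  have hAm : A ≤ (t + 1) / 2 := by nlinarith [sq_nonneg y]
  have hsA : Real.sqrt A ≤ m := by
    rw [hm]; exact Real.sqrt_le_sqrt hAm
  have hsA0 : 0 ≤ Real.sqrt A := Real.sqrt_nonneg _
  set x : ℝ := (Real.sqrt A - 1) / y with hx
  have hmem : ((x, y) : ℝ × ℝ) ∈ tibarZaharia ⁻¹' {t} := by
    rw [tz_fiber_eq]
    simp only [mem_setOf_eq]
    have hxy : x * y + 1 = Real.sqrt A := by
      rw [hx, div_mul_cancel₀ _ hy0.ne']; ring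
    rw [hxy, Real.sq_sqrt hA0, hA]; ring
  have hnorm := hR _ hmem
  have hnx : -x = (1 - Real.sqrt A) / y := by rw [hx]; ring
  have h5 : (1 - m) / y ≤ -x := by
    rw [hnx]
    exact (div_le_div_iff_of_pos_right hy0).2 (by linarith)
  have hge : R + 1 ≤ (1 - m) / y := by
    rw [le_div_iff₀ hy0]
    have h2' : y * (R + 1) ≤ 1 - m :=
      (le_div_iff₀ (by positivity : (0:ℝ) < R + 1)).1 (min_le_right _ _)
    nlinarith
  have h7 : |x| ≤ ‖((x, y) : ℝ × ℝ)‖ := by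
    simpa [Real.norm_eq_abs] using norm_fst_le ((x, y) : ℝ × ℝ)
  linarith [neg_le_abs x]


lemma tz_components (t : ℝ) (h1 : -1 < t) (h2 : t < 1) :
    Nat.card (ConnectedComponents ↥(tibarZaharia ⁻¹' {t})) = 2 := by
  have hA := halfA_isConnected (t + 1) (by linarith)
  have hB : IsConnected
      {p : ℝ × ℝ | (p.1 * p.2 + 1) ^ 2 + (p.2 ^ 2 - 1) ^ 2 = t + 1 ∧ p.2 < 0} := by
    rw [tz_B_eq]
    exact hA.image _ continuous_neg.continuousOn
  exact two_components (tz_split t h2) hA hB (fun p hp => hp.2) (fun p hp => hp.2)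

/-- Tibăr–Zaharia's example, fibers: for −1 < t < 0 the fiber f⁻¹(t) is nonempty, compact,
with exactly 2 connected components; for 0 < t < 1 the fiber f⁻¹(t) is nonempty, noncompact,
with exactly 2 connected components. -/
theorem tibarZaharia_fibers :
    (∀ t : ℝ, -1 < t → t < 0 →
      (tibarZaharia ⁻¹' {t}).Nonempty ∧
      IsCompact (tibarZaharia ⁻¹' {t}) ∧
      Nat.card (ConnectedComponents ↥(tibarZaharia ⁻¹' {t})) = 2) ∧
    (∀ t : ℝ, 0 < t → t < 1 →
      (tibarZaharia ⁻¹' {t}).Nonempty ∧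
      ¬ IsCompact (tibarZaharia ⁻¹' {t}) ∧
      Nat.card (ConnectedComponents ↥(tibarZaharia ⁻¹' {t})) = 2) := by
  constructor
  · intro t ht1 ht2
    exact ⟨tz_nonempty t ht1, tz_compact t ht1 ht2, tz_components t ht1 (by linarith)⟩
  · intro t ht1 ht2
    exact ⟨tz_nonempty t (by linarith), tz_noncompact t ht1 ht2,
      tz_components t (by linarith) ht2⟩
end

section
/- The map f : ℝ² → ℝ defined by f(x, y) = x²y² + 2xy + (y² − 1)² is not locally trivial at infinity at 0 ∈ ℝ; that is, there do not exist a compact set K ⊆ ℝ², an open neighborhood D ⊆ ℝ of 0, a topological space F, and a homeomorphism h from (ℝ² ∖ K) ∩ f⁻¹(D) onto D × F whose first component equals f. -/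
open Set Filter Topology

lemma tz_cont : Continuous tibarZaharia := by
  unfold tibarZaharia; fun_prop

/-- The zero fiber is unbounded. -/
lemma tz_unbounded (R : ℝ) : ∃ z : ℝ × ℝ, tibarZaharia z = 0 ∧ R < ‖z‖ := by
  set a : ℝ := |R| + 3 with ha
  have ha3 : (3 : ℝ) ≤ a := by rw [ha]; linarith [abs_nonneg R]
  set y : ℝ := 1 / a with hy
  have ha0 : (0 : ℝ) < a := by linarith
  have hy0 : 0 < y := by positivity
  have hy1 : y ≤ 1 / 3 := by
    rw [hy]; exact one_div_le_one_div_of_le (by norm_num) ha3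
  have hay : a * y = 1 := by rw [hy, mul_one_div, div_self ha0.ne']
  have h2 : (0 : ℝ) ≤ 2 - y ^ 2 := by nlinarith
  set s : ℝ := Real.sqrt (2 - y ^ 2) with hs
  have hs2 : s ^ 2 = 2 - y ^ 2 := Real.sq_sqrt h2
  have hs0 : 0 ≤ s := Real.sqrt_nonneg _
  have hsle : s ≤ 2 := by nlinarith
  set x : ℝ := s - a with hx
  refine ⟨(x, y), ?_, ?_⟩
  · show x ^ 2 * y ^ 2 + 2 * x * y + (y ^ 2 - 1) ^ 2 = 0
    have h1 : x * y + 1 = s * y := by rw [hx]; nlinarith [hay]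
    calc x ^ 2 * y ^ 2 + 2 * x * y + (y ^ 2 - 1) ^ 2
        = (x * y + 1) ^ 2 + (y ^ 2 - 1) ^ 2 - 1 := by ring
      _ = (s * y) ^ 2 + (y ^ 2 - 1) ^ 2 - 1 := by rw [h1]
      _ = (s ^ 2) * y ^ 2 + (y ^ 2 - 1) ^ 2 - 1 := by ring
      _ = (2 - y ^ 2) * y ^ 2 + (y ^ 2 - 1) ^ 2 - 1 := by rw [hs2]
      _ = 0 := by ring
  · have h1 : |x| ≤ ‖((x, y) : ℝ × ℝ)‖ := by
      rw [Prod.norm_def, Real.norm_eq_abs]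
      exact le_max_left _ _
    have h3 : -x ≤ |x| := neg_le_abs x
    have h4 : R ≤ |R| := le_abs_self R
    have h2' : a - 2 ≤ -x := by rw [hx]; linarith
    have : R < a - 2 := by rw [ha]; linarith
    linarith

/-- Strict sublevel sets below 0 are bounded. -/
lemma tz_sublevel {b : ℝ} (hb : b < 0) :
    ∃ R : ℝ, 0 ≤ R ∧ ∀ z : ℝ × ℝ, tibarZaharia z ≤ b → ‖z‖ ≤ R := by
  refine ⟨Real.sqrt (8 / (-b)) + 2, by positivity, ?_⟩
  rintro ⟨x, y⟩ hz
  have hz' : x ^ 2 * y ^ 2 + 2 * x * y + (y ^ 2 - 1) ^ 2 ≤ b := hz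
  have hy2 : y ^ 2 ≤ 2 := by nlinarith [sq_nonneg (x * y + 1), sq_nonneg y]
  have hylb : (-b) / 2 ≤ y ^ 2 := by nlinarith [sq_nonneg (x * y + 1), sq_nonneg (y ^ 2)]
  have hxy : x ^ 2 * y ^ 2 ≤ 4 := by
    nlinarith [sq_nonneg (x * y + 2), sq_nonneg (y ^ 2 - 1)]
  have hx2 : x ^ 2 ≤ 8 / (-b) := by
    rw [le_div_iff₀ (by linarith : (0:ℝ) < -b)]
    nlinarith [mul_nonneg (sq_nonneg x) (by linarith : (0:ℝ) ≤ 2 * y ^ 2 + b)]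
  rw [Prod.norm_def, Real.norm_eq_abs, Real.norm_eq_abs]
  have hxabs : |x| ≤ Real.sqrt (8 / (-b)) := by
    rw [← Real.sqrt_sq_eq_abs]
    exact Real.sqrt_le_sqrt hx2
  have hyabs : |y| ≤ 2 := by
    rw [abs_le]; constructor <;> nlinarith
  have hsn : 0 ≤ Real.sqrt (8 / (-b)) := Real.sqrt_nonneg _
  exact max_le (by linarith) (by linarith)

set_option maxHeartbeats 1600000 in
/-- The map f(x, y) = x²y² + 2xy + (y² − 1)² is not locally trivial at infinity at 0 ∈ ℝ:
there are no compact K ⊆ ℝ², open neighborhood D of 0, topological space F and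
homeomorphism (ℝ² ∖ K) ∩ f⁻¹(D) ≅ D × F whose first component is f. -/
theorem tibarZaharia_not_locally_trivial_at_infinity :
    ¬ ∃ (K : Set (ℝ × ℝ)), IsCompact K ∧
      ∃ (D : Set ℝ), IsOpen D ∧ (0 : ℝ) ∈ D ∧
        ∃ (F : Type) (_ : TopologicalSpace F)
          (h : ↥(Kᶜ ∩ tibarZaharia ⁻¹' D) ≃ₜ ↥D × F),
          ∀ z : ↥(Kᶜ ∩ tibarZaharia ⁻¹' D), (((h z).1 : ℝ)) = tibarZaharia z.1 := by
  rintro ⟨K, hK, D, hD, hD0, F, _, h, hfst⟩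
  -- bound for K
  obtain ⟨RK', hRK'⟩ := hK.isBounded.subset_closedBall 0
  set RK : ℝ := max RK' 0 with hRKdef
  have hRK0 : 0 ≤ RK := le_max_right _ _
  have hKb : ∀ z ∈ K, ‖z‖ ≤ RK := by
    intro z hz
    have := hRK' hz
    rw [Metric.mem_closedBall, dist_zero_right] at this
    exact this.trans (le_max_left _ _)
  -- unbounded sequence in the zero fiber, off K
  have hwex : ∀ n : ℕ, ∃ z : ℝ × ℝ, tibarZaharia z = 0 ∧ RK + n < ‖z‖ :=
    fun n => tz_unbounded _
  choose w hw0 hwn using hwex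
  have hwn' : ∀ n : ℕ, (n : ℝ) < ‖w n‖ := fun n => by have := hwn n; linarith
  have hwE : ∀ n, w n ∈ Kᶜ ∩ tibarZaharia ⁻¹' D := by
    intro n
    refine ⟨fun hKmem => ?_, ?_⟩
    · have h1 := hKb _ hKmem
      have h2 := hwn n
      have h3 : (0:ℝ) ≤ (n:ℝ) := Nat.cast_nonneg n
      linarith
    · show tibarZaharia (w n) ∈ D
      rw [hw0 n]; exact hD0
  set d0 : ↥D := ⟨0, hD0⟩ with hd0
  set u : ℕ → F := fun n => (h ⟨w n, hwE n⟩).2 with hu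
  have hhw : ∀ n, h ⟨w n, hwE n⟩ = (d0, u n) := by
    intro n
    refine Prod.ext ?_ rfl
    exact Subtype.ext (by rw [hfst]; exact hw0 n)
  have hwsymm : ∀ n, h.symm (d0, u n) = ⟨w n, hwE n⟩ := fun n => by
    rw [← hhw n, Homeomorph.symm_apply_apply]
  -- escape lemma: u n eventually leaves every compact subset of F
  have hesc : ∀ L : Set F, IsCompact L → ∃ N0 : ℕ, ∀ n ≥ N0, u n ∉ L := by
    intro L hL
    have hS : IsCompact ((fun p : ↥D × F => ((h.symm p : ↥(Kᶜ ∩ tibarZaharia ⁻¹' D)) : ℝ × ℝ)) '' ({d0} ×ˢ L)) :=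
      (isCompact_singleton.prod hL).image
        (continuous_subtype_val.comp h.symm.continuous)
    obtain ⟨M, hM⟩ := hS.isBounded.subset_closedBall 0
    refine ⟨⌈M⌉₊ + 1, fun n hn hnL => ?_⟩
    have hw_mem : w n ∈ (fun p : ↥D × F => ((h.symm p : ↥(Kᶜ ∩ tibarZaharia ⁻¹' D)) : ℝ × ℝ)) '' ({d0} ×ˢ L) :=
      ⟨(d0, u n), ⟨rfl, hnL⟩, by simp only [hwsymm n]⟩
    have hMn := hM hw_mem
    rw [Metric.mem_closedBall, dist_zero_right] at hMn
    have h1 : (n : ℝ) ≤ M := le_trans (le_of_lt (hwn' n)) hMn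
    have h2 : M ≤ (⌈M⌉₊ : ℝ) := Nat.le_ceil M
    have h3 : ((⌈M⌉₊ + 1 : ℕ) : ℝ) ≤ (n : ℝ) := by exact_mod_cast hn
    push_cast at h3
    linarith
  -- choose c < 0 with [c, 0] ⊆ D
  obtain ⟨δ, hδpos, hball⟩ := Metric.isOpen_iff.mp hD 0 hD0
  set c : ℝ := -(min δ 1) / 2 with hc
  have hmin0 : 0 < min δ 1 := lt_min hδpos one_pos
  have hmin1 : min δ 1 ≤ 1 := min_le_right _ _
  have hminδ : min δ 1 ≤ δ := min_le_left _ _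
  have hc0 : c < 0 := by rw [hc]; linarith
  have hIccD : Icc c 0 ⊆ D := by
    intro t ht
    apply hball
    rw [Metric.mem_ball, dist_zero_right, Real.norm_eq_abs, abs_lt]
    constructor
    · have : -(δ/2) ≤ c := by rw [hc]; linarith
      linarith [ht.1]
    · linarith [ht.2]
  -- sublevel bound for c/2
  obtain ⟨R0, hR00, hR0⟩ := tz_sublevel (show c / 2 < 0 by linarith)
  set R : ℝ := max R0 RK with hR
  have hRR0 : R0 ≤ R := le_max_left _ _
  have hRRK : RK ≤ R := le_max_right _ _
  have hR0' : 0 ≤ R := hR00.trans hRR0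
  set N : ℕ := ⌈R + 1⌉₊ with hN
  have hNge : R + 1 ≤ (N : ℝ) := Nat.le_ceil _
  -- connectedness of Icc c 0
  haveI hconn : ConnectedSpace ↥(Icc c 0) :=
    Subtype.connectedSpace (isConnected_Icc (le_of_lt hc0))
  set θ : ↥(Icc c 0) → ↥D := fun t => ⟨t.1, hIccD t.2⟩ with hθdef
  have hθc : Continuous θ := Continuous.subtype_mk continuous_subtype_val _
  have hcm : c ∈ Icc c 0 := ⟨le_refl c, le_of_lt hc0⟩
  have h0m : (0:ℝ) ∈ Icc c 0 := ⟨le_of_lt hc0, le_refl 0⟩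
  -- key construction: points of norm R+1 over fiber values in [c,0]
  have key : ∀ n : ℕ, ∃ zE : ↥(Kᶜ ∩ tibarZaharia ⁻¹' D), ‖(zE : ℝ × ℝ)‖ = R + 1 ∧
      tibarZaharia (zE : ℝ × ℝ) ∈ Icc c 0 ∧ (h zE).2 = u (n + N) := by
    intro n
    set m := n + N with hm
    set Γ : ↥(Icc c 0) → ℝ := fun t => ‖((h.symm (θ t, u m) : ↥(Kᶜ ∩ tibarZaharia ⁻¹' D)) : ℝ × ℝ)‖ with hΓ
    have hΓc : Continuous Γ :=
      continuous_norm.comp (continuous_subtype_val.comp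
        (h.symm.continuous.comp (hθc.prodMk continuous_const)))
    have hfsymm : ∀ t : ↥(Icc c 0),
        tibarZaharia ((h.symm (θ t, u m) : ↥(Kᶜ ∩ tibarZaharia ⁻¹' D)) : ℝ × ℝ) = (t : ℝ) := by
      intro t
      have := hfst (h.symm (θ t, u m))
      rw [Homeomorph.apply_symm_apply] at this
      exact this.symm
    have hmem : R + 1 ∈ Icc (Γ ⟨c, hcm⟩) (Γ ⟨0, h0m⟩) := by
      constructor
      · have hfc' : tibarZaharia ((h.symm (θ ⟨c, hcm⟩, u m) : ↥(Kᶜ ∩ tibarZaharia ⁻¹' D)) : ℝ × ℝ) = c :=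
          hfsymm ⟨c, hcm⟩
        have hb := hR0 _ (by rw [hfc']; linarith)
        calc Γ ⟨c, hcm⟩ ≤ R0 := hb
          _ ≤ R + 1 := by linarith
      · have hθ0 : θ ⟨0, h0m⟩ = d0 := Subtype.ext rfl
        have hΓ0 : Γ ⟨0, h0m⟩ = ‖w m‖ := by
          rw [hΓ]; simp only; rw [hθ0, hwsymm m]
        rw [hΓ0]
        have h1 : (N : ℝ) ≤ (m : ℝ) := by exact_mod_cast Nat.le_add_left N n
        have h2 := hwn' m
        linarith
    obtain ⟨ξ, hξ⟩ := intermediate_value_univ ⟨c, hcm⟩ ⟨0, h0m⟩ hΓc hmem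
    refine ⟨h.symm (θ ξ, u m), hξ, ?_, ?_⟩
    · rw [hfsymm ξ]; exact ξ.2
    · rw [Homeomorph.apply_symm_apply]
  choose z hz1 hz2 hz3 using key
  -- compactness: extract convergent subsequence on the sphere of radius R+1
  have hsub : ∀ n, ((z n : ℝ × ℝ)) ∈ Metric.sphere (0 : ℝ × ℝ) (R + 1) := by
    intro n
    rw [Metric.mem_sphere, dist_zero_right]
    exact hz1 n
  obtain ⟨zs, hzsmem, φ, hφ, hφt⟩ :=
    (isCompact_sphere (0 : ℝ × ℝ) (R + 1)).tendsto_subseq hsub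
  have hzs_norm : ‖zs‖ = R + 1 := by
    rw [Metric.mem_sphere, dist_zero_right] at hzsmem; exact hzsmem
  have hfzs : tibarZaharia zs ∈ Icc c 0 :=
    isClosed_Icc.mem_of_tendsto ((tz_cont.tendsto zs).comp hφt)
      (Filter.Eventually.of_forall fun k => hz2 (φ k))
  have hzsE : zs ∈ Kᶜ ∩ tibarZaharia ⁻¹' D := by
    refine ⟨fun hKm => ?_, hIccD hfzs⟩
    have := hKb _ hKm
    rw [hzs_norm] at this
    linarith
  -- convergence in the subtype
  have hφtE : Tendsto (fun k => z (φ k)) atTop (𝓝 (⟨zs, hzsE⟩ : ↥(Kᶜ ∩ tibarZaharia ⁻¹' D))) := by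
    rw [Topology.IsEmbedding.subtypeVal.tendsto_nhds_iff]
    exact hφt
  have hut : Tendsto (fun k => u (φ k + N)) atTop (𝓝 ((h ⟨zs, hzsE⟩).2)) := by
    have h1 : Tendsto (fun k => h (z (φ k))) atTop (𝓝 (h ⟨zs, hzsE⟩)) :=
      (h.continuous.tendsto _).comp hφtE
    have h2 : Tendsto (fun k => (h (z (φ k))).2) atTop (𝓝 ((h ⟨zs, hzsE⟩).2)) :=
      (continuous_snd.tendsto _).comp h1
    simpa only [hz3] using h2
  have hLcomp : IsCompact (insert ((h ⟨zs, hzsE⟩).2) (Set.range fun k => u (φ k + N))) :=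
    hut.isCompact_insert_range
  obtain ⟨N0, hN0⟩ := hesc _ hLcomp
  have hk : φ N0 + N ≥ N0 := le_trans hφ.le_apply (Nat.le_add_right _ _)
  exact hN0 _ hk (Set.mem_insert_of_mem _ ⟨N0, rfl⟩)
end

section
/- Let P be a monic real polynomial of degree d ≥ 1 and let c ∈ ℝ be such that every real root of P − c is simple (i.e. P(x) = c implies P'(x) ≠ 0). Let n₊ be the number of connected components of the open set {x ∈ ℝ : P(x) > c} and n₋ the number of connected components of the open set {x ∈ ℝ : P(x) < c}; both numbers are finite. Then n₊ = n₋ + 1 if d is even, and n₊ = n₋ if d is odd. -/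
open Set Polynomial

open Filter

private lemma not_iff_flip {a b : Prop} : ¬(a ↔ b) ↔ (¬a ↔ b) := by tauto

private lemma evenCard (n : ℕ) :
    ((Finset.range n).filter (fun j => Even j)).card = (n + 1) / 2 := by
  induction n with
  | zero => simp
  | succ n ih =>
    rw [Finset.range_add_one, Finset.filter_insert]
    by_cases h : Even n
    · rw [if_pos h, Finset.card_insert_of_notMem (by simp)]
      rw [Nat.even_iff] at h; omega
    · rw [if_neg h]
      rw [Nat.even_iff] at h; omega

private lemma notEvenCard (n : ℕ) :
    ((Finset.range n).filter (fun j => ¬ Even j)).card = n / 2 := by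
  have h := Finset.card_filter_add_card_filter_not
    (s := Finset.range n) (p := fun j => Even j)
  have h2 := evenCard n
  simp only [Finset.card_range] at h
  omega

private lemma card_components (T : Set ℝ) (φ : ℝ → ℕ) (A : Finset ℕ)
    (hc : ∀ x y, x ∈ T → y ∈ T → x ≤ y → φ x = φ y → Icc x y ⊆ T)
    (hc2 : ∀ x y, x ∈ T → y ∈ T → x ≤ y → Icc x y ⊆ T → φ x = φ y)
    (hA : ∀ j, j ∈ A ↔ ∃ x ∈ T, φ x = j) :
    Finite (ConnectedComponents ↥T) ∧ Nat.card (ConnectedComponents ↥T) = A.card := by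
  classical
  -- key equivalence
  have key : ∀ a b : ↥T, (ConnectedComponents.mk a = ConnectedComponents.mk b ↔
      φ a.val = φ b.val) := by
    intro a b
    constructor
    · intro h
      rw [ConnectedComponents.coe_eq_coe] at h
      have hb : b ∈ connectedComponent a := by
        rw [h]; exact mem_connectedComponent
      set s : Set ℝ := Subtype.val '' connectedComponent a with hs
      have hsp : IsPreconnected s :=
        (isPreconnected_connectedComponent).image _ continuous_subtype_val.continuousOn
      have hsT : s ⊆ T := by rintro z ⟨w, _, rfl⟩; exact w.2
      have has : (a : ℝ) ∈ s := ⟨a, mem_connectedComponent, rfl⟩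
      have hbs : (b : ℝ) ∈ s := ⟨b, hb, rfl⟩
      have hoc := hsp.ordConnected
      rcases le_total (a : ℝ) (b : ℝ) with hab | hab
      · exact hc2 a b a.2 b.2 hab ((hoc.out has hbs).trans hsT)
      · exact (hc2 b a b.2 a.2 hab ((hoc.out hbs has).trans hsT)).symm
    · intro h
      have main : ∀ a b : ↥T, (a : ℝ) ≤ b → φ a.val = φ b.val →
          ConnectedComponents.mk a = ConnectedComponents.mk b := by
        intro a b hab h
        have hIcc : Icc (a : ℝ) b ⊆ T := hc a b a.2 b.2 hab h
        have h1 : Icc (a : ℝ) b ⊆ connectedComponentIn T a :=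
          isPreconnected_Icc.subset_connectedComponentIn (left_mem_Icc.2 hab) hIcc
        have h2 : (b : ℝ) ∈ connectedComponentIn T a := h1 (right_mem_Icc.2 hab)
        rw [connectedComponentIn_eq_image a.2] at h2
        rcases h2 with ⟨b', hb', hbb⟩
        have : b' = b := Subtype.ext hbb
        rw [ConnectedComponents.coe_eq_coe]
        rw [← this]
        exact connectedComponent_eq hb'
      rcases le_total (a : ℝ) (b : ℝ) with hab | hab
      · exact main a b hab h
      · exact (main b a hab h.symm).symm
  -- the bijection
  have hwit : ∀ j : ↥A, ∃ x ∈ T, φ x = (j : ℕ) := fun j => (hA j).1 j.2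
  let θ : ↥A → ConnectedComponents ↥T := fun j =>
    ConnectedComponents.mk ⟨(hwit j).choose, (hwit j).choose_spec.1⟩
  have hθφ : ∀ j : ↥A, ∀ a : ↥T, φ a.val = (j : ℕ) → θ j = ConnectedComponents.mk a := by
    intro j a ha
    exact (key _ _).2 (by rw [(hwit j).choose_spec.2, ← ha])
  have hinj : Function.Injective θ := by
    intro j k h
    have := (key _ _).1 h
    rw [(hwit j).choose_spec.2, (hwit k).choose_spec.2] at this
    exact Subtype.ext this
  have hsurj : Function.Surjective θ := by
    intro C
    rcases ConnectedComponents.surjective_coe C with ⟨a, rfl⟩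
    have hj : φ a.val ∈ A := (hA _).2 ⟨a.val, a.2, rfl⟩
    exact ⟨⟨φ a.val, hj⟩, hθφ ⟨φ a.val, hj⟩ a rfl⟩
  have hbij : Function.Bijective θ := ⟨hinj, hsurj⟩
  refine ⟨Finite.of_surjective θ hsurj, ?_⟩
  rw [← Nat.card_eq_of_bijective θ hbij, Nat.card_eq_finsetCard]

private lemma no_double_pos (Q : Polynomial ℝ) (r u v : ℝ) (hur : u < r) (hrv : r < v)
    (hr : Q.eval r = 0) (hd : Q.derivative.eval r ≠ 0)
    (hl : ∀ z ∈ Ioo u r, 0 < Q.eval z) (hrt : ∀ z ∈ Ioo r v, 0 < Q.eval z) : False := by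
  have hD := (Q.hasDerivAt r)
  rw [hasDerivAt_iff_tendsto_slope] at hD
  have hle : Q.derivative.eval r ≤ 0 := by
    have htl : Tendsto (slope (fun x => Q.eval x) r) (nhdsWithin r (Iio r))
        (nhds (Q.derivative.eval r)) :=
      hD.mono_left (nhdsWithin_mono r (fun z hz => ne_of_lt hz))
    refine le_of_tendsto htl ?_
    filter_upwards [Ioo_mem_nhdsLT_of_mem (⟨hur, le_refl r⟩ : r ∈ Ioc u r)] with z hz
    rw [slope_def_field, hr, sub_zero]
    exact le_of_lt (div_neg_of_pos_of_neg (hl z hz) (sub_neg.2 hz.2))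
  have hge : 0 ≤ Q.derivative.eval r := by
    have htr : Tendsto (slope (fun x => Q.eval x) r) (nhdsWithin r (Ioi r))
        (nhds (Q.derivative.eval r)) :=
      hD.mono_left (nhdsWithin_mono r (fun z hz => ne_of_gt hz))
    refine ge_of_tendsto htr ?_
    filter_upwards [Ioo_mem_nhdsGT_of_mem (⟨le_refl r, hrv⟩ : r ∈ Ico r v)] with z hz
    rw [slope_def_field, hr, sub_zero]
    exact le_of_lt (div_pos (hrt z hz) (sub_pos.2 hz.1))
  exact hd (le_antisymm hle hge)

/-- For a monic real polynomial P of degree d ≥ 1 and c ∈ ℝ such that all real roots of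
P − c are simple, the sets {P > c} and {P < c} have finitely many connected components,
whose numbers n₊ and n₋ satisfy n₊ = n₋ + 1 if d is even and n₊ = n₋ if d is odd. -/
theorem monic_polynomial_level_components
    (P : Polynomial ℝ) (hP : P.Monic) (hdeg : 1 ≤ P.natDegree) (c : ℝ)
    (hsimple : ∀ x : ℝ, P.eval x = c → P.derivative.eval x ≠ 0) :
    Finite (ConnectedComponents ↥{x : ℝ | c < P.eval x}) ∧
    Finite (ConnectedComponents ↥{x : ℝ | P.eval x < c}) ∧
    (Even P.natDegree →
      Nat.card (ConnectedComponents ↥{x : ℝ | c < P.eval x})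
        = Nat.card (ConnectedComponents ↥{x : ℝ | P.eval x < c}) + 1) ∧
    (Odd P.natDegree →
      Nat.card (ConnectedComponents ↥{x : ℝ | c < P.eval x})
        = Nat.card (ConnectedComponents ↥{x : ℝ | P.eval x < c})) := by
  classical
  set Sp : Set ℝ := {x : ℝ | c < P.eval x} with hSpdef
  set Sm : Set ℝ := {x : ℝ | P.eval x < c} with hSmdef
  set Q : Polynomial ℝ := P - C c with hQdef
  have hQeval : ∀ x, Q.eval x = P.eval x - c := fun x => by simp [hQdef]
  have hdegP : 0 < P.degree := natDegree_pos_iff_degree_pos.1 (by omega)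
  have hQm : Q.Monic := hP.sub_of_left (lt_of_le_of_lt degree_C_le hdegP)
  have hQd : Q.natDegree = P.natDegree := natDegree_sub_C
  have hQdeg : 0 < Q.degree := natDegree_pos_iff_degree_pos.1 (by omega)
  have hQ0 : Q ≠ 0 := hQm.ne_zero
  have hsim : ∀ x, Q.eval x = 0 → Q.derivative.eval x ≠ 0 := by
    intro x hx
    have h1 : P.eval x = c := by have := hQeval x; rw [hx] at this; linarith
    have h2 : Q.derivative = P.derivative := by rw [hQdef]; simp
    rw [h2]; exact hsimple x h1
  set R : Finset ℝ := Q.roots.toFinset with hRdef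
  have hmemR : ∀ x, x ∈ R ↔ Q.eval x = 0 := by
    intro x
    rw [hRdef, Multiset.mem_toFinset, Polynomial.mem_roots hQ0]
    exact Iff.rfl
  set m : ℕ := R.card with hmdef
  set φ : ℝ → ℕ := fun x => (R.filter (fun r => r < x)).card with hφdef
  have hφle : ∀ x, φ x ≤ m := fun x => Finset.card_filter_le _ _
  have hmono : ∀ x y : ℝ, x ≤ y →
      R.filter (fun r => r < x) ⊆ R.filter (fun r => r < y) := by
    intro x y hxy r hr
    rw [Finset.mem_filter] at hr ⊢
    exact ⟨hr.1, lt_of_lt_of_le hr.2 hxy⟩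
  have hNoRoot : ∀ x y : ℝ, x ≤ y → Q.eval x ≠ 0 → Q.eval y ≠ 0 → φ x = φ y →
      ∀ z ∈ Icc x y, Q.eval z ≠ 0 := by
    intro x y hxy hx hy hφ z hz hzr
    have hzR : z ∈ R := (hmemR z).2 hzr
    have h1 : z ∈ R.filter (fun r => r < y) :=
      Finset.mem_filter.2 ⟨hzR, lt_of_le_of_ne hz.2 (by rintro rfl; exact hy hzr)⟩
    have h2 : z ∉ R.filter (fun r => r < x) := by
      rw [Finset.mem_filter]; rintro ⟨-, hlt⟩; exact absurd hz.1 (not_le.2 hlt)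
    have hss : R.filter (fun r => r < x) ⊂ R.filter (fun r => r < y) :=
      ⟨hmono x y hxy, fun hsub => h2 (hsub h1)⟩
    exact absurd hφ (ne_of_lt (Finset.card_lt_card hss))
  have hSignIff : ∀ x y : ℝ, x ≤ y → (∀ z ∈ Icc x y, Q.eval z ≠ 0) →
      ∀ z ∈ Icc x y, (0 < Q.eval z ↔ 0 < Q.eval x) := by
    intro x y hxy hnz z hz
    have hxmem : x ∈ Icc x y := left_mem_Icc.2 hxy
    constructor
    · intro hpos
      by_contra hneg
      have hxneg : Q.eval x < 0 := lt_of_le_of_ne (not_lt.1 hneg) (hnz x hxmem)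
      have h0 : (0:ℝ) ∈ Icc (Q.eval x) (Q.eval z) := ⟨le_of_lt hxneg, le_of_lt hpos⟩
      rcases intermediate_value_Icc hz.1 (Q.continuous.continuousOn) h0 with ⟨w, hw, hw0⟩
      exact hnz w ⟨hw.1, hw.2.trans hz.2⟩ hw0
    · intro hpos
      by_contra hneg
      have hzneg : Q.eval z < 0 := lt_of_le_of_ne (not_lt.1 hneg) (hnz z hz)
      have h0 : (0:ℝ) ∈ Icc (Q.eval z) (Q.eval x) := ⟨le_of_lt hzneg, le_of_lt hpos⟩
      rcases intermediate_value_Icc' hz.1 (Q.continuous.continuousOn) h0 with ⟨w, hw, hw0⟩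
      exact hnz w ⟨hw.1, hw.2.trans hz.2⟩ hw0
  have hsame : ∀ x y : ℝ, Q.eval x ≠ 0 → Q.eval y ≠ 0 → φ x = φ y →
      (0 < Q.eval x ↔ 0 < Q.eval y) := by
    intro x y hx hy hφ
    rcases le_total x y with h | h
    · exact (hSignIff x y h (hNoRoot x y h hx hy hφ) y (right_mem_Icc.2 h)).symm
    · exact hSignIff y x h (hNoRoot y x h hy hx hφ.symm) x (right_mem_Icc.2 h)
  have hSp : ∀ x, x ∈ Sp ↔ 0 < Q.eval x := by
    intro x; rw [hSpdef]; simp only [mem_setOf_eq, hQeval]; exact (sub_pos).symm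
  have hSm : ∀ x, x ∈ Sm ↔ Q.eval x < 0 := by
    intro x; rw [hSmdef]; simp only [mem_setOf_eq, hQeval]; exact (sub_neg).symm
  set Ap : Finset ℕ := (Finset.range (m+1)).filter (fun j => ∃ x ∈ Sp, φ x = j) with hApdef
  set Am : Finset ℕ := (Finset.range (m+1)).filter (fun j => ∃ x ∈ Sm, φ x = j) with hAmdef
  have hAp : ∀ j, j ∈ Ap ↔ ∃ x ∈ Sp, φ x = j := by
    intro j
    rw [hApdef, Finset.mem_filter, Finset.mem_range]
    constructor
    · exact fun h => h.2
    · rintro ⟨x, hx, rfl⟩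
      exact ⟨Nat.lt_succ_of_le (hφle x), x, hx, rfl⟩
  have hAm : ∀ j, j ∈ Am ↔ ∃ x ∈ Sm, φ x = j := by
    intro j
    rw [hAmdef, Finset.mem_filter, Finset.mem_range]
    constructor
    · exact fun h => h.2
    · rintro ⟨x, hx, rfl⟩
      exact ⟨Nat.lt_succ_of_le (hφle x), x, hx, rfl⟩
  have hc2gen : ∀ (T : Set ℝ), (∀ z ∈ T, Q.eval z ≠ 0) →
      ∀ x y, x ∈ T → y ∈ T → x ≤ y → Icc x y ⊆ T → φ x = φ y := by
    intro T hT x y hx hy hxy hIcc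
    have hsub : R.filter (fun r => r < y) ⊆ R.filter (fun r => r < x) := by
      intro r hr
      rw [Finset.mem_filter] at hr ⊢
      refine ⟨hr.1, ?_⟩
      by_contra hge
      exact hT r (hIcc ⟨not_lt.1 hge, le_of_lt hr.2⟩) ((hmemR r).1 hr.1)
    exact le_antisymm (Finset.card_le_card (hmono x y hxy)) (Finset.card_le_card hsub)
  have hcp : ∀ x y, x ∈ Sp → y ∈ Sp → x ≤ y → φ x = φ y → Icc x y ⊆ Sp := by
    intro x y hx hy hxy hφ z hz
    have hnz := hNoRoot x y hxy (ne_of_gt ((hSp x).1 hx)) (ne_of_gt ((hSp y).1 hy)) hφ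
    exact (hSp z).2 ((hSignIff x y hxy hnz z hz).2 ((hSp x).1 hx))
  have hcm : ∀ x y, x ∈ Sm → y ∈ Sm → x ≤ y → φ x = φ y → Icc x y ⊆ Sm := by
    intro x y hx hy hxy hφ z hz
    have hnz := hNoRoot x y hxy (ne_of_lt ((hSm x).1 hx)) (ne_of_lt ((hSm y).1 hy)) hφ
    refine (hSm z).2 ?_
    have := (hSignIff x y hxy hnz z hz)
    have hxneg := (hSm x).1 hx
    rcases lt_trichotomy (Q.eval z) 0 with h | h | h
    · exact h
    · exact absurd h (hnz z hz)
    · exact absurd (this.1 h) (not_lt.2 (le_of_lt hxneg))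
  obtain ⟨finp, cardp⟩ := card_components Sp φ Ap hcp
    (hc2gen Sp (fun z hz => ne_of_gt ((hSp z).1 hz))) hAp
  obtain ⟨finm, cardm⟩ := card_components Sm φ Am hcm
    (hc2gen Sm (fun z hz => ne_of_lt ((hSm z).1 hz))) hAm
  -- roots indexed by number of smaller roots
  have hroots : ∀ j, j < m → ∃ r ∈ R, (R.filter (fun s => s < r)).card = j := by
    intro j hj
    set e := R.orderIsoOfFin rfl with hedef
    refine ⟨(e ⟨j, hj⟩ : {x // x ∈ R}).val, (e ⟨j, hj⟩).2, ?_⟩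
    have hkey : (R.filter (fun s => s < ((e ⟨j, hj⟩ : {x // x ∈ R}) : ℝ))).card
        = (Finset.Iio (⟨j, hj⟩ : Fin m)).card := by
      refine Finset.card_bij (fun s hs => e.symm ⟨s, (Finset.mem_filter.1 hs).1⟩) ?_ ?_ ?_
      · intro s hs
        rw [Finset.mem_Iio, ← e.lt_iff_lt, e.apply_symm_apply]
        exact Subtype.mk_lt_mk.2 (Finset.mem_filter.1 hs).2
      · intro s hs t ht heq
        have := congrArg e heq
        rw [e.apply_symm_apply, e.apply_symm_apply] at this
        exact congrArg Subtype.val this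
      · intro i hi
        refine ⟨(e i).val, Finset.mem_filter.2 ⟨(e i).2, ?_⟩, ?_⟩
        · exact Subtype.mk_lt_mk.1 (e.lt_iff_lt.2 (Finset.mem_Iio.1 hi))
        · simp
    rw [hkey, Fin.card_Iio]
  have hgap : ∀ r ∈ R, ∃ δ > 0, ∀ s ∈ R, s ≠ r → δ ≤ |s - r| := by
    intro r hr
    by_cases h : (R.erase r).Nonempty
    · refine ⟨((R.erase r).image (fun s => |s - r|)).min' (h.image _), ?_, ?_⟩
      · have hmem := Finset.min'_mem _ (h.image (fun s => |s - r|))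
        rcases Finset.mem_image.1 hmem with ⟨s, hs, heq⟩
        rw [← heq]
        exact abs_pos.2 (sub_ne_zero.2 (Finset.ne_of_mem_erase hs))
      · intro s hs hne
        exact Finset.min'_le _ _ (Finset.mem_image_of_mem _ (Finset.mem_erase.2 ⟨hne, hs⟩))
    · exact ⟨1, one_pos, fun s hs hne =>
        absurd ⟨s, Finset.mem_erase.2 ⟨hne, hs⟩⟩ h⟩
  -- sample points on both sides of the (j+1)-st root
  have hsamples : ∀ j, j < m → ∃ u v : ℝ, Q.eval u ≠ 0 ∧ Q.eval v ≠ 0 ∧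
      φ u = j ∧ φ v = j + 1 ∧ ¬(0 < Q.eval u ↔ 0 < Q.eval v) := by
    intro j hj
    obtain ⟨r, hrR, hrcard⟩ := hroots j hj
    obtain ⟨δ, hδ, hδmin⟩ := hgap r hrR
    set u := r - δ/2 with hudef
    set v := r + δ/2 with hvdef
    have hur : u < r := by rw [hudef]; linarith
    have hrv : r < v := by rw [hvdef]; linarith
    have hfar : ∀ s ∈ R, s ≠ r → s ≤ r - δ ∨ r + δ ≤ s := by
      intro s hs hne
      have := hδmin s hs hne
      rcases abs_cases (s - r) with ⟨h1, -⟩ | ⟨h1, -⟩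
      · right; linarith [this, h1]
      · left; linarith [this, h1]
    have huR : Q.eval u ≠ 0 := by
      intro h
      rcases hfar u ((hmemR u).2 h) (ne_of_lt hur) with h' | h' <;>
        [skip; linarith] <;> rw [hudef] at h' <;> linarith
    have hvR : Q.eval v ≠ 0 := by
      intro h
      rcases hfar v ((hmemR v).2 h) (ne_of_gt hrv) with h' | h' <;>
        [linarith; skip] <;> rw [hvdef] at h' <;> linarith
    have hfu : R.filter (fun s => s < u) = R.filter (fun s => s < r) := by
      apply Finset.filter_congr
      intro s hs
      constructor
      · intro h; exact lt_trans h hur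
      · intro h
        rcases hfar s hs (ne_of_lt h) with h' | h'
        · rw [hudef]; linarith
        · linarith
    have hfv : R.filter (fun s => s < v) = insert r (R.filter (fun s => s < r)) := by
      ext s
      rw [Finset.mem_insert, Finset.mem_filter, Finset.mem_filter]
      constructor
      · rintro ⟨hs, hlt⟩
        by_cases hne : s = r
        · exact Or.inl hne
        · rcases hfar s hs hne with h' | h'
          · exact Or.inr ⟨hs, by linarith⟩
          · exfalso; rw [hvdef] at hlt; linarith
      · rintro (rfl | ⟨hs, hlt⟩)
        · exact ⟨hrR, hrv⟩
        · exact ⟨hs, lt_trans hlt hrv⟩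
    have hφu : φ u = j := by simp only [hφdef]; rw [hfu]; exact hrcard
    have hφv : φ v = j + 1 := by
      simp only [hφdef]; rw [hfv, Finset.card_insert_of_notMem (by simp), hrcard]
    -- no roots strictly between u and r, r and v
    have hnl : ∀ z ∈ Icc u u, Q.eval z ≠ 0 := by
      intro z hz; rw [Icc_self, mem_singleton_iff] at hz; rw [hz]; exact huR
    have hsignl : ∀ z, z ∈ Ioo u r → (0 < Q.eval z ↔ 0 < Q.eval u) := by
      intro z hz
      have hnz : ∀ w ∈ Icc u z, Q.eval w ≠ 0 := by
        intro w hw h0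
        have hwR := (hmemR w).2 h0
        have hwr : w ≠ r := by rintro rfl; linarith [hw.2, hz.2]
        rcases hfar w hwR hwr with h' | h'
        · rw [hudef] at hw; linarith [hw.1]
        · linarith [hw.2, hz.2]
      exact hSignIff u z (le_of_lt hz.1) hnz z (right_mem_Icc.2 (le_of_lt hz.1))
    have hsignr : ∀ z, z ∈ Ioo r v → (0 < Q.eval z ↔ 0 < Q.eval v) := by
      intro z hz
      have hnz : ∀ w ∈ Icc z v, Q.eval w ≠ 0 := by
        intro w hw h0
        have hwR := (hmemR w).2 h0
        have hwr : w ≠ r := by rintro rfl; linarith [hw.1, hz.1]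
        rcases hfar w hwR hwr with h' | h'
        · linarith [hw.1, hz.1]
        · rw [hvdef] at hw; linarith [hw.2]
      exact (hSignIff z v (le_of_lt hz.2) hnz v (right_mem_Icc.2 (le_of_lt hz.2))).symm
    refine ⟨u, v, huR, hvR, hφu, hφv, ?_⟩
    intro hiff
    have hr0 : Q.eval r = 0 := (hmemR r).1 hrR
    rcases lt_or_gt_of_ne huR with hun | hup
    · -- u negative, hence v negative; apply no_double_pos to -Q
      have hvn : Q.eval v < 0 := by
        rcases lt_or_gt_of_ne hvR with h | h
        · exact h
        · exact absurd (hiff.2 h) (not_lt.2 (le_of_lt hun))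
      refine no_double_pos (-Q) r u v hur hrv (by simp [hr0]) (by simp [hsim r hr0]) ?_ ?_
      · intro z hz
        simp only [eval_neg, neg_pos]
        rcases lt_trichotomy (Q.eval z) 0 with h | h | h
        · exact h
        · exact absurd ((hmemR z).2 h) (by
            intro hzR
            rcases hfar z hzR (ne_of_lt hz.2) with h' | h'
            · rw [hudef] at hz; linarith [hz.1]
            · linarith [hz.2])
        · exact absurd ((hsignl z hz).1 h) (not_lt.2 (le_of_lt hun))
      · intro z hz
        simp only [eval_neg, neg_pos]
        rcases lt_trichotomy (Q.eval z) 0 with h | h | h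
        · exact h
        · exact absurd ((hmemR z).2 h) (by
            intro hzR
            rcases hfar z hzR (ne_of_gt hz.1) with h' | h'
            · linarith [hz.1]
            · rw [hvdef] at hz; linarith [hz.2])
        · exact absurd ((hsignr z hz).1 h) (not_lt.2 (le_of_lt hvn))
    · have hvp : 0 < Q.eval v := hiff.1 hup
      refine no_double_pos Q r u v hur hrv hr0 (hsim r hr0) ?_ ?_
      · exact fun z hz => (hsignl z hz).2 hup
      · exact fun z hz => (hsignr z hz).2 hvp
  -- top endpoint
  have htop : ∃ x, 0 < Q.eval x ∧ φ x = m := by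
    have h1 : ∀ᶠ x in Filter.atTop, 0 < Q.eval x :=
      (Q.tendsto_atTop_of_leadingCoeff_nonneg hQdeg
        (by rw [hQm.leadingCoeff]; norm_num)).eventually_gt_atTop 0
    have h2 : ∀ᶠ x in Filter.atTop, ∀ r ∈ R, r < x :=
      R.eventually_all.2 (fun r _ => Filter.eventually_gt_atTop r)
    rcases (h1.and h2).exists with ⟨x, hx1, hx2⟩
    refine ⟨x, hx1, ?_⟩
    simp only [hφdef]
    rw [Finset.filter_true_of_mem (fun r hr => hx2 r hr)]
  -- bottom endpoint
  have hbot : ∃ x, Q.eval x ≠ 0 ∧ φ x = 0 ∧ (0 < Q.eval x ↔ Even P.natDegree) := by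
    set Qn : Polynomial ℝ := Q.comp (-X) with hQndef
    have hevaln : ∀ x : ℝ, Qn.eval x = Q.eval (-x) := by
      intro x; rw [hQndef, eval_comp]; simp
    have hdegn : Qn.natDegree = Q.natDegree := by
      rw [hQndef, natDegree_comp]; simp
    have hdegn' : 0 < Qn.degree := by
      rw [← natDegree_pos_iff_degree_pos, hdegn, hQd]
      omega
    have hlc : Qn.leadingCoeff = (-1 : ℝ) ^ Q.natDegree := by
      rw [hQndef, leadingCoeff_comp (by simp)]
      simp [hQm.leadingCoeff]
    have h2 : ∀ᶠ x in Filter.atTop, ∀ r ∈ R, -x < r :=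
      R.eventually_all.2 (fun r _ =>
        (Filter.eventually_gt_atTop (-r)).mono (fun x h => by linarith))
    have hφ0 : ∀ x : ℝ, (∀ r ∈ R, -x < r) → φ (-x) = 0 := by
      intro x hx
      simp only [hφdef]
      rw [Finset.card_eq_zero, Finset.filter_eq_empty_iff]
      intro r hr
      exact not_lt.2 (le_of_lt (hx r hr))
    by_cases hpar : Even P.natDegree
    · have hlc1 : Qn.leadingCoeff = 1 := by
        rw [hlc, hQd]; exact hpar.neg_one_pow
      have h1 : ∀ᶠ x in Filter.atTop, 0 < Qn.eval x :=
        (Qn.tendsto_atTop_of_leadingCoeff_nonneg hdegn'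
          (by rw [hlc1]; norm_num)).eventually_gt_atTop 0
      rcases (h1.and h2).exists with ⟨x, hx1, hx2⟩
      rw [hevaln] at hx1
      exact ⟨-x, ne_of_gt hx1, hφ0 x hx2, by simp [hx1, hpar]⟩
    · have hlc1 : Qn.leadingCoeff = -1 := by
        rw [hlc, hQd]; exact Odd.neg_one_pow (Nat.not_even_iff_odd.1 hpar)
      have h1 : ∀ᶠ x in Filter.atTop, Qn.eval x < 0 :=
        (Qn.tendsto_atBot_of_leadingCoeff_nonpos hdegn'
          (by rw [hlc1]; norm_num)).eventually (Filter.eventually_lt_atBot 0)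
      rcases (h1.and h2).exists with ⟨x, hx1, hx2⟩
      rw [hevaln] at hx1
      refine ⟨-x, ne_of_lt hx1, hφ0 x hx2, ?_⟩
      simp only [hpar, iff_false]
      exact not_lt.2 (le_of_lt hx1)
  -- union and disjointness
  have hUnion : ∀ j, j ≤ m → (j ∈ Ap ∨ j ∈ Am) := by
    intro j hj
    have hwit : ∃ x, Q.eval x ≠ 0 ∧ φ x = j := by
      by_cases h : j < m
      · rcases hsamples j h with ⟨u, v, hu, hv, hφu, hφv, -⟩
        exact ⟨u, hu, hφu⟩
      · have hjm : j = m := by omega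
        rcases htop with ⟨x, hx, hφx⟩
        exact ⟨x, ne_of_gt hx, by rw [hjm]; exact hφx⟩
    rcases hwit with ⟨x, hx, hφx⟩
    rcases lt_or_gt_of_ne hx with h | h
    · exact Or.inr ((hAm j).2 ⟨x, (hSm x).2 h, hφx⟩)
    · exact Or.inl ((hAp j).2 ⟨x, (hSp x).2 h, hφx⟩)
  have hDisj : ∀ j, ¬(j ∈ Ap ∧ j ∈ Am) := by
    rintro j ⟨hp, hm'⟩
    rcases (hAp j).1 hp with ⟨x, hx, hφx⟩
    rcases (hAm j).1 hm' with ⟨y, hy, hφy⟩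
    have := (hsame x y (ne_of_gt ((hSp x).1 hx)) (ne_of_lt ((hSm y).1 hy))
      (hφx.trans hφy.symm)).1 ((hSp x).1 hx)
    exact absurd this (not_lt.2 (le_of_lt ((hSm y).1 hy)))
  have hAlt : ∀ j, j < m → (j ∈ Ap ↔ (j+1) ∈ Am) := by
    intro j hj
    rcases hsamples j hj with ⟨u, v, hu, hv, hφu, hφv, hflip⟩
    constructor
    · intro hjA
      rcases (hAp j).1 hjA with ⟨x, hx, hφx⟩
      have hupos : 0 < Q.eval u :=
        (hsame x u (ne_of_gt ((hSp x).1 hx)) hu (hφx.trans hφu.symm)).1 ((hSp x).1 hx)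
      have hvneg : Q.eval v < 0 := by
        rcases lt_or_gt_of_ne hv with h | h
        · exact h
        · exact absurd ⟨fun _ => h, fun _ => hupos⟩ hflip
      exact (hAm (j+1)).2 ⟨v, (hSm v).2 hvneg, hφv⟩
    · intro hjA
      rcases (hAm (j+1)).1 hjA with ⟨y, hy, hφy⟩
      have hvneg : Q.eval v < 0 := by
        have hsv := hsame y v (ne_of_lt ((hSm y).1 hy)) hv (hφy.trans hφv.symm)
        rcases lt_or_gt_of_ne hv with h | h
        · exact h
        · exact absurd (hsv.2 h) (not_lt.2 (le_of_lt ((hSm y).1 hy)))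
      have hupos : 0 < Q.eval u := by
        rcases lt_or_gt_of_ne hu with h | h
        · exact absurd ⟨fun h0 => absurd h0 (not_lt.2 (le_of_lt h)),
            fun h0 => absurd h0 (not_lt.2 (le_of_lt hvneg))⟩ hflip
        · exact h
      exact (hAp j).2 ⟨u, (hSp u).2 hupos, hφu⟩
  have h0p : 0 ∈ Ap ↔ Even P.natDegree := by
    rcases hbot with ⟨x, hx0, hφx, hxiff⟩
    constructor
    · intro h
      rcases (hAp 0).1 h with ⟨z, hz, hφz⟩
      exact hxiff.1 ((hsame z x (ne_of_gt ((hSp z).1 hz)) hx0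
        (hφz.trans hφx.symm)).1 ((hSp z).1 hz))
    · intro h
      exact (hAp 0).2 ⟨x, (hSp x).2 (hxiff.2 h), hφx⟩
  have hmp : m ∈ Ap := by
    rcases htop with ⟨x, hx, hφx⟩
    exact (hAp m).2 ⟨x, (hSp x).2 hx, hφx⟩
  have hchar : ∀ j, j ≤ m → (j ∈ Ap ↔ (Even j ↔ Even P.natDegree)) := by
    intro j
    induction j with
    | zero =>
      intro _
      simpa using h0p
    | succ j ih =>
      intro hj
      have hj' : j ≤ m := by omega
      have hjm : j < m := by omega
      have h1 : ((j+1) ∈ Ap ↔ ¬ (j ∈ Ap)) := by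
        constructor
        · intro h hjp
          exact hDisj (j+1) ⟨h, (hAlt j hjm).1 hjp⟩
        · intro h
          rcases hUnion (j+1) hj with h' | h'
          · exact h'
          · exact absurd ((hAlt j hjm).2 h') h
      rw [h1, ih hj', Nat.even_add_one]
      exact not_iff_flip
  have hApEq : Ap = (Finset.range (m+1)).filter
      (fun j => (Even j ↔ Even P.natDegree)) := by
    ext j
    constructor
    · intro h
      have hjr : j ≤ m := by
        rcases (hAp j).1 h with ⟨x, hx, rfl⟩
        exact hφle x
      rw [Finset.mem_filter, Finset.mem_range]
      exact ⟨by omega, (hchar j hjr).1 h⟩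
    · intro h
      rw [Finset.mem_filter, Finset.mem_range] at h
      exact (hchar j (by omega)).2 h.2
  have hAmEq : Am = (Finset.range (m+1)).filter
      (fun j => ¬(Even j ↔ Even P.natDegree)) := by
    ext j
    constructor
    · intro h
      have hjr : j ≤ m := by
        rcases (hAm j).1 h with ⟨x, hx, rfl⟩
        exact hφle x
      rw [Finset.mem_filter, Finset.mem_range]
      exact ⟨by omega, fun hcc => hDisj j ⟨(hchar j hjr).2 hcc, h⟩⟩
    · intro h
      rw [Finset.mem_filter, Finset.mem_range] at h
      rcases hUnion j (by omega) with h' | h'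
      · exact absurd ((hchar j (by omega)).1 h') h.2
      · exact h'
  have hmchar : (Even m ↔ Even P.natDegree) := (hchar m le_rfl).1 hmp
  refine ⟨finp, finm, ?_, ?_⟩
  · intro hpar
    rw [cardp, cardm, hApEq, hAmEq]
    have e1 : (Finset.range (m+1)).filter (fun j => (Even j ↔ Even P.natDegree))
        = (Finset.range (m+1)).filter (fun j => Even j) := by
      apply Finset.filter_congr; intro j _; simp [hpar]
    have e2 : (Finset.range (m+1)).filter (fun j => ¬(Even j ↔ Even P.natDegree))
        = (Finset.range (m+1)).filter (fun j => ¬ Even j) := by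
      apply Finset.filter_congr; intro j _; simp [hpar]
    rw [e1, e2, evenCard, notEvenCard]
    have hm : Even m := hmchar.2 hpar
    rw [Nat.even_iff] at hm
    omega
  · intro hpar
    have hpar' : ¬ Even P.natDegree := Nat.not_even_iff_odd.2 hpar
    rw [cardp, cardm, hApEq, hAmEq]
    have e1 : (Finset.range (m+1)).filter (fun j => (Even j ↔ Even P.natDegree))
        = (Finset.range (m+1)).filter (fun j => ¬ Even j) := by
      apply Finset.filter_congr; intro j _; simp [hpar']
    have e2 : (Finset.range (m+1)).filter (fun j => ¬(Even j ↔ Even P.natDegree))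
        = (Finset.range (m+1)).filter (fun j => Even j) := by
      apply Finset.filter_congr; intro j _; simp [hpar']
    rw [e1, e2, evenCard, notEvenCard]
    have hm : ¬ Even m := fun h => hpar' (hmchar.1 h)
    rw [Nat.even_iff] at hm
    omega
end
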